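/- arXiv:1611.03841 — 14 statements merged into one kernel-verified Lean document; each statement's English description precedes it below -/
import Mathlib

section
/- The foresighted utility defined by the coupled integral equations U(a,θ) = ρ ∫₀^∞ ( ∫₀^t e^{-ρτ} u(a) dτ + e^{-ρt} U_I ) θβa e^{-θβa t} dt and U_I = ∫₀^∞ ( ∫₀^t e^{-ρτ}(-q) dτ + ρ^{-1} e^{-ρt} U(a,θ) ) δ e^{-δt} dt has the unique closed-form solution U(a,θ) = ((ρ+δ)u(a) - βθa q)/(ρ+δ+βθa), for ρ, δ, β, q > 0, θ ∈ (0,1], a > 0. -/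
/-!
Both equations are expectations over an exponential clock. For a clock of rate `k` and
discount rate `ρ`, the expected discounted value of a flow `c` until the clock rings plus a
terminal value `X` is `(c + k X) / (ρ + k)`. The two equations therefore reduce to a linear
system in `U` and `U_I`, whose determinant is `ρ (ρ + δ + βθa)`.
-/

open MeasureTheory Real Set

lemma integral_exp_neg_mul_Ioi_zero {k : ℝ} (hk : 0 < k) :
    ∫ t in Ioi (0:ℝ), exp (-k * t) = k⁻¹ := by
  rw [integral_exp_mul_Ioi (neg_neg_of_pos hk), mul_zero, exp_zero, neg_div_neg_eq, one_div]

lemma integral_exp_neg_mul_Ioc_zero {ρ : ℝ} (hρ : ρ ≠ 0) {t : ℝ} (ht : 0 ≤ t) :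
    ∫ s in Ioc (0:ℝ) t, exp (-ρ * s) = (1 - exp (-ρ * t)) / ρ := by
  rw [← intervalIntegral.integral_of_le ht,
    intervalIntegral.integral_comp_mul_left exp (neg_ne_zero.mpr hρ), integral_exp,
    mul_zero, exp_zero, smul_eq_mul, inv_neg, neg_mul_comm, ← div_eq_inv_mul, neg_sub]

lemma integral_discounted_value_exp_clock {ρ k : ℝ} (hρ : ρ ≠ 0) (hk : 0 < k)
    (hρk : 0 < ρ + k) (c X : ℝ) :
    ∫ t in Ioi (0:ℝ),
      ((∫ s in Ioc (0:ℝ) t, exp (-ρ * s) * c) + exp (-ρ * t) * X) * (k * exp (-k * t))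
      = (c + k * X) / (ρ + k) := by
  have h_pointwise : ∀ t ∈ Ioi (0:ℝ),
      ((∫ s in Ioc (0:ℝ) t, exp (-ρ * s) * c) + exp (-ρ * t) * X) * (k * exp (-k * t))
      = c * k / ρ * exp (-k * t) + (k * X - c * k / ρ) * exp (-(ρ + k) * t) := by
    intro t ht
    rw [integral_mul_const, integral_exp_neg_mul_Ioc_zero hρ (le_of_lt ht),
      show -(ρ + k) * t = -ρ * t + -k * t by ring, exp_add]
    field_simp
    ring
  rw [setIntegral_congr_fun measurableSet_Ioi h_pointwise,
    integral_add ((exp_neg_integrableOn_Ioi 0 hk).const_mul _)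
      ((exp_neg_integrableOn_Ioi 0 hρk).const_mul _),
    integral_const_mul, integral_const_mul,
    integral_exp_neg_mul_Ioi_zero hk, integral_exp_neg_mul_Ioi_zero hρk]
  field_simp
  ring

theorem foresighted_utility_closed_form_general
    (ρ δ β q θ a : ℝ) (u : ℝ → ℝ)
    (hρ : 0 < ρ) (hδ : 0 < δ) (hβ : 0 < β)
    (hθ : θ ∈ Set.Ioc (0:ℝ) 1) (ha : 0 < a)
    (U UI : ℝ)
    (hU : U = ρ * ∫ t in Set.Ioi (0:ℝ),
      ((∫ s in Set.Ioc (0:ℝ) t, Real.exp (-ρ * s) * u a) + Real.exp (-ρ * t) * UI)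
        * (θ * β * a * Real.exp (-(θ * β * a) * t)))
    (hUI : UI = ∫ t in Set.Ioi (0:ℝ),
      ((∫ s in Set.Ioc (0:ℝ) t, Real.exp (-ρ * s) * (-q)) + ρ⁻¹ * Real.exp (-ρ * t) * U)
        * (δ * Real.exp (-δ * t))) :
    U = ((ρ + δ) * u a - β * θ * a * q) / (ρ + δ + β * θ * a) := by
  have hθ₀ : 0 < θ := hθ.1
  have hk : 0 < θ * β * a := by positivity
  rw [integral_discounted_value_exp_clock hρ.ne' hk (by positivity)] at hU
  simp_rw [show ∀ t, ρ⁻¹ * exp (-ρ * t) * U = exp (-ρ * t) * (ρ⁻¹ * U) from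
    fun t => by ring] at hUI
  rw [integral_discounted_value_exp_clock hρ.ne' hδ (by positivity)] at hUI
  have hρk : ρ + θ * β * a ≠ 0 := by positivity
  have hρδ : ρ + δ ≠ 0 := by positivity
  have hdet : ρ + δ + β * θ * a ≠ 0 := by positivity
  field_simp at hU hUI ⊢
  apply mul_left_cancel₀ hρ.ne'
  linear_combination (ρ + δ) * hU + θ * β * a * hUI

/-- the coupled integral equations for the foresighted utility have the
unique closed-form solution `U = ((ρ+δ)u(a) - βθa q)/(ρ+δ+βθa)`. -/
theorem foresighted_utility_closed_form
    (ρ δ β q θ a : ℝ) (u : ℝ → ℝ)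
    (hρ : 0 < ρ) (hδ : 0 < δ) (hβ : 0 < β) (hq : 0 < q)
    (hθ : θ ∈ Set.Ioc (0:ℝ) 1) (ha : 0 < a)
    (U UI : ℝ)
    (hU : U = ρ * ∫ t in Set.Ioi (0:ℝ),
      ((∫ s in Set.Ioc (0:ℝ) t, Real.exp (-ρ * s) * u a) + Real.exp (-ρ * t) * UI)
        * (θ * β * a * Real.exp (-(θ * β * a) * t)))
    (hUI : UI = ∫ t in Set.Ioi (0:ℝ),
      ((∫ s in Set.Ioc (0:ℝ) t, Real.exp (-ρ * s) * (-q)) + ρ⁻¹ * Real.exp (-ρ * t) * U)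
        * (δ * Real.exp (-δ * t))) :
    U = ((ρ + δ) * u a - β * θ * a * q) / (ρ + δ + β * θ * a) :=
  foresighted_utility_closed_form_general ρ δ β q θ a u hρ hδ hβ hθ ha U UI hU hUI
end

section
/- Let u(a) = v(r₀ a) - c a with v twice differentiable, v' > 0, v'' < 0, v(0) = 0, v(r₀M) > cM, and v'(r₀M) < c/r₀ < v'(0). Define U(a) = ((ρ+δ)u(a) - βθa q)/(ρ+δ+βθa) on [0,M]. If θ ≥ (r₀v'(0) - c)(ρ+δ)/(qβ), then a = 0 maximizes U on [0,M]. -/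
/-!
Concavity of `v` puts its graph below the tangent at `0`, so `v (r₀ a) ≤ r₀ v'(0) a`. Hence the
numerator of `U a` is at most `a ((ρ + δ) (r₀ v'(0) - c) - θ q β)`, which the threshold on `θ`
makes nonpositive, while the denominator is positive; so `U a ≤ 0 = U 0`.
-/

open Set

lemma antitoneOn_Ici_of_hasDerivAt_nonpos {f f' : ℝ → ℝ} {a : ℝ}
    (hf : ∀ x, a ≤ x → HasDerivAt f (f' x) x) (hf' : ∀ x, a ≤ x → f' x ≤ 0) :
    AntitoneOn f (Ici a) :=
  antitoneOn_of_hasDerivWithinAt_nonpos (convex_Ici a)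
    (fun x hx => (hf x hx).continuousAt.continuousWithinAt)
    (fun x hx => (hf x (interior_subset hx)).hasDerivWithinAt)
    (fun x hx => hf' x (interior_subset hx))

lemma le_tangent_of_antitoneOn_deriv {f f' : ℝ → ℝ} {a x : ℝ}
    (hf : ∀ y, a ≤ y → HasDerivAt f (f' y) y) (hf' : AntitoneOn f' (Ici a)) (hx : a ≤ x) :
    f x ≤ f a + f' a * (x - a) := by
  have hslope := (convex_Ici a).image_sub_le_mul_sub_of_deriv_le
    (fun y hy => (hf y hy).continuousAt.continuousWithinAt)
    (fun y hy => (hf y (interior_subset hy)).differentiableAt.differentiableWithinAt)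
    (fun y hy => by
      have hay : a ≤ y := (interior_subset hy : y ∈ Ici a)
      rw [(hf y hay).deriv]
      exact hf' self_mem_Ici hay hay)
    a self_mem_Ici x hx hx
  linarith

theorem zero_participation_optimal_general
    (r₀ c q ρ δ β M θ : ℝ) (v v' v'' : ℝ → ℝ)
    (hr₀ : 0 < r₀) (hq : 0 < q) (hρ : 0 < ρ) (hδ : 0 < δ) (hβ : 0 < β)
    (hθ : θ ∈ Set.Icc (0:ℝ) 1)
    (hder1 : ∀ x, 0 ≤ x → HasDerivAt v (v' x) x)
    (hder2 : ∀ x, 0 ≤ x → HasDerivAt v' (v'' x) x)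
    (hv''neg : ∀ x, 0 ≤ x → v'' x < 0)
    (hv0 : v 0 = 0)
    (u U : ℝ → ℝ)
    (hu : ∀ a, u a = v (r₀ * a) - c * a)
    (hUdef : ∀ a, U a = ((ρ + δ) * u a - β * θ * a * q) / (ρ + δ + β * θ * a))
    (hθbig : θ ≥ (r₀ * v' 0 - c) * (ρ + δ) / (q * β)) :
    ∀ a ∈ Set.Icc (0:ℝ) M, U a ≤ U 0 := by
  rintro a ⟨ha, -⟩
  have hθ₀ : 0 ≤ θ := hθ.1
  have hv'_anti : AntitoneOn v' (Ici 0) :=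
    antitoneOn_Ici_of_hasDerivAt_nonpos hder2 fun x hx => (hv''neg x hx).le
  have htangent : v (r₀ * a) ≤ v' 0 * (r₀ * a) := by
    simpa [hv0] using le_tangent_of_antitoneOn_deriv hder1 hv'_anti (by positivity : 0 ≤ r₀ * a)
  have hthreshold : (r₀ * v' 0 - c) * (ρ + δ) ≤ θ * (q * β) :=
    (div_le_iff₀ (by positivity)).mp hθbig
  have hnum : (ρ + δ) * u a - β * θ * a * q ≤ 0 := by
    rw [hu]
    nlinarith [mul_le_mul_of_nonneg_left htangent (by positivity : 0 ≤ ρ + δ),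
      mul_le_mul_of_nonneg_right hthreshold ha]
  have hU₀ : U 0 = 0 := by simp [hUdef, hu, hv0]
  rw [hU₀, hUdef]
  exact div_nonpos_of_nonpos_of_nonneg hnum (by positivity)

/-- if the system compromise state exceeds the threshold
`(r₀v'(0) - c)(ρ+δ)/(qβ)`, then `a = 0` maximizes the foresighted utility on `[0,M]`. -/
theorem zero_participation_optimal
    (r₀ c q ρ δ β M θ : ℝ) (v v' v'' : ℝ → ℝ)
    (hr₀ : 0 < r₀) (hc : 0 < c) (hq : 0 < q) (hρ : 0 < ρ) (hδ : 0 < δ) (hβ : 0 < β)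
    (hM : 0 < M) (hθ : θ ∈ Set.Icc (0:ℝ) 1)
    (hder1 : ∀ x, 0 ≤ x → HasDerivAt v (v' x) x)
    (hder2 : ∀ x, 0 ≤ x → HasDerivAt v' (v'' x) x)
    (hv'pos : ∀ x, 0 ≤ x → 0 < v' x)
    (hv''neg : ∀ x, 0 ≤ x → v'' x < 0)
    (hv0 : v 0 = 0)
    (hvM : v (r₀ * M) > c * M)
    (hfoc1 : v' (r₀ * M) < c / r₀) (hfoc2 : c / r₀ < v' 0)
    (u U : ℝ → ℝ)
    (hu : ∀ a, u a = v (r₀ * a) - c * a)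
    (hUdef : ∀ a, U a = ((ρ + δ) * u a - β * θ * a * q) / (ρ + δ + β * θ * a))
    (hθbig : θ ≥ (r₀ * v' 0 - c) * (ρ + δ) / (q * β)) :
    ∀ a ∈ Set.Icc (0:ℝ) M, U a ≤ U 0 :=
  zero_participation_optimal_general r₀ c q ρ δ β M θ v v' v'' hr₀ hq hρ hδ hβ hθ hder1 hder2
    hv''neg hv0 u U hu hUdef hθbig
end

section
/- Under the same assumptions on v, if 0 < θ < (r₀v'(0) - c)(ρ+δ)/(qβ), then the equation u'(a)(ρ+δ+βθa) - u(a)βθ - βθq = 0 has a unique solution a*(θ) in (0,M), and a*(θ) is the unique maximizer of U(a,θ) = ((ρ+δ)u(a) - βθa q)/(ρ+δ+βθa) on [0,M]. -/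
/-!
Write `K = ρ + δ`, `k = βθ` and `F(a) = u'(a)(K + ka) - k u(a) - kq` for the first-order
residual. Its derivative is `u''(a)(K + ka) < 0`, so `F` is strictly decreasing; it is positive
at `0` by the smallness of `θ` and negative at `M` because `u'(M) < 0 < u(M)`. Hence `F` has
exactly one zero `a*` in `(0, M)`. The quotient rule gives `U'(a) = K F(a) / (K + ka)²`, so `U`
increases up to `a*` and decreases after it.
-/

open Set

noncomputable section

def focResidual (K k q : ℝ) (u u' : ℝ → ℝ) (a : ℝ) : ℝ :=
  u' a * (K + k * a) - u a * k - k * q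

def discountedUtility (K k q : ℝ) (u : ℝ → ℝ) (a : ℝ) : ℝ :=
  (K * u a - k * a * q) / (K + k * a)

end

theorem lt_of_deriv_pos_of_deriv_neg {f : ℝ → ℝ} {l m r b : ℝ} (hlm : l ≤ m)
    (hmr : m ≤ r) (hf : ContinuousOn f (Icc l r)) (hpos : ∀ x ∈ Ioo l m, 0 < deriv f x)
    (hneg : ∀ x ∈ Ioo m r, deriv f x < 0) (hb : b ∈ Icc l r) (hb_ne : b ≠ m) :
    f b < f m := by
  rcases hb_ne.lt_or_gt with hbm | hmb
  · have hmono : StrictMonoOn f (Icc l m) :=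
      strictMonoOn_of_deriv_pos (convex_Icc l m) (hf.mono (Icc_subset_Icc le_rfl hmr))
        (by simpa only [interior_Icc] using hpos)
    exact hmono ⟨hb.1, hbm.le⟩ ⟨hlm, le_rfl⟩ hbm
  · have hanti : StrictAntiOn f (Icc m r) :=
      strictAntiOn_of_deriv_neg (convex_Icc m r) (hf.mono (Icc_subset_Icc hlm le_rfl))
        (by simpa only [interior_Icc] using hneg)
    exact hanti ⟨le_rfl, hmr⟩ ⟨hmb.le, hb.2⟩ hmb

theorem hasDerivAt_comp_const_mul {f : ℝ → ℝ} {f' r x : ℝ} (hf : HasDerivAt f f' (r * x)) :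
    HasDerivAt (fun a => f (r * a)) (r * f') x := by
  refine hf.comp x ((hasDerivAt_id' x).const_mul r) |>.congr_deriv ?_
  ring

theorem hasDerivAt_affine (K k x : ℝ) : HasDerivAt (fun a => K + k * a) k x := by
  simpa using ((hasDerivAt_id x).const_mul k).const_add K

section FirstOrderCondition

variable {K k q : ℝ} {u u' u'' : ℝ → ℝ} {x : ℝ}

theorem hasDerivAt_focResidual (hu : HasDerivAt u (u' x) x) (hu' : HasDerivAt u' (u'' x) x) :
    HasDerivAt (focResidual K k q u u') (u'' x * (K + k * x)) x := by
  have h := ((hu'.mul (hasDerivAt_affine K k x)).sub (hu.mul_const k)).sub_const (k * q)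
  exact h.congr_deriv (by ring)

theorem hasDerivAt_discountedUtility (hu : HasDerivAt u (u' x) x) (hx : K + k * x ≠ 0) :
    HasDerivAt (discountedUtility K k q u) (K * focResidual K k q u u' x / (K + k * x) ^ 2) x := by
  have hnum : HasDerivAt (fun a => K * u a - k * a * q) (K * u' x - k * q) x := by
    refine (hu.const_mul K).sub (((hasDerivAt_id' x).const_mul k).mul_const q) |>.congr_deriv ?_
    ring
  refine (hnum.div (hasDerivAt_affine K k x) hx).congr_deriv ?_
  unfold focResidual
  ring

variable {M : ℝ} (hK : 0 < K) (hk : 0 ≤ k) (hu : ∀ x ∈ Icc 0 M, HasDerivAt u (u' x) x)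
include hK hk hu

theorem strictAntiOn_focResidual (hu' : ∀ x ∈ Icc 0 M, HasDerivAt u' (u'' x) x)
    (hu'' : ∀ x ∈ Ioo 0 M, u'' x < 0) : StrictAntiOn (focResidual K k q u u') (Icc 0 M) := by
  have hF x (hx : x ∈ Icc 0 M) :=
    hasDerivAt_focResidual (K := K) (k := k) (q := q) (hu x hx) (hu' x hx)
  refine strictAntiOn_of_deriv_neg (convex_Icc 0 M)
    (fun x hx => (hF x hx).continuousAt.continuousWithinAt) fun x hx => ?_
  rw [interior_Icc] at hx
  rw [(hF x (Ioo_subset_Icc_self hx)).deriv]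
  exact mul_neg_of_neg_of_pos (hu'' x hx) (add_pos_of_pos_of_nonneg hK (mul_nonneg hk hx.1.le))

theorem discountedUtility_lt_of_focResidual_eq_zero
    (hF : StrictAntiOn (focResidual K k q u u') (Icc 0 M)) {a : ℝ} (ha : a ∈ Icc 0 M)
    (hFa : focResidual K k q u u' a = 0) {b : ℝ} (hb : b ∈ Icc 0 M) (hba : b ≠ a) :
    discountedUtility K k q u b < discountedUtility K k q u a := by
  have hD x (hx : x ∈ Icc 0 M) : 0 < K + k * x := add_pos_of_pos_of_nonneg hK (mul_nonneg hk hx.1)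
  have hU x (hx : x ∈ Icc 0 M) := hasDerivAt_discountedUtility (q := q) (hu x hx) (hD x hx).ne'
  refine lt_of_deriv_pos_of_deriv_neg ha.1 ha.2
    (fun x hx => (hU x hx).continuousAt.continuousWithinAt) (fun x hx => ?_) (fun x hx => ?_)
    hb hba
  · have hx' : x ∈ Icc 0 M := ⟨hx.1.le, hx.2.le.trans ha.2⟩
    have hFx : 0 < focResidual K k q u u' x := hFa ▸ hF hx' ha hx.2
    rw [(hU x hx').deriv]
    exact div_pos (mul_pos hK hFx) (pow_pos (hD x hx') 2)
  · have hx' : x ∈ Icc 0 M := ⟨ha.1.trans hx.1.le, hx.2.le⟩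
    have hFx : focResidual K k q u u' x < 0 := hFa ▸ hF ha hx' hx.1
    rw [(hU x hx').deriv]
    exact div_neg_of_neg_of_pos (mul_neg_of_pos_of_neg hK hFx) (pow_pos (hD x hx') 2)

theorem exists_unique_focResidual_eq_zero_isMax (hM : 0 < M)
    (hu' : ∀ x ∈ Icc 0 M, HasDerivAt u' (u'' x) x) (hu'' : ∀ x ∈ Ioo 0 M, u'' x < 0)
    (hF0 : 0 < focResidual K k q u u' 0) (hFM : focResidual K k q u u' M < 0) :
    ∃ a ∈ Ioo 0 M, focResidual K k q u u' a = 0 ∧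
      (∀ b ∈ Ioo 0 M, focResidual K k q u u' b = 0 → b = a) ∧
      ∀ b ∈ Icc 0 M, b ≠ a → discountedUtility K k q u b < discountedUtility K k q u a := by
  have hF := strictAntiOn_focResidual (q := q) hK hk hu hu' hu''
  have hFcont : ContinuousOn (focResidual K k q u u') (Icc 0 M) := fun x hx =>
    (hasDerivAt_focResidual (hu x hx) (hu' x hx)).continuousAt.continuousWithinAt
  obtain ⟨a, ha, hFa⟩ := intermediate_value_Ioo' hM.le hFcont ⟨hFM, hF0⟩
  exact ⟨a, ha, hFa,
    fun b hb hFb => hF.injOn (Ioo_subset_Icc_self hb) (Ioo_subset_Icc_self ha) (hFb.trans hFa.symm),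
    fun b hb hba =>
      discountedUtility_lt_of_focResidual_eq_zero hK hk hu hF (Ioo_subset_Icc_self ha) hFa hb hba⟩

end FirstOrderCondition

theorem positive_participation_optimal_general
    (r₀ c q ρ δ β M θ : ℝ) (v v' v'' : ℝ → ℝ)
    (hr₀ : 0 < r₀) (hq : 0 < q) (hρ : 0 < ρ) (hδ : 0 < δ) (hβ : 0 < β)
    (hM : 0 < M)
    (hder1 : ∀ x, 0 ≤ x → HasDerivAt v (v' x) x)
    (hder2 : ∀ x, 0 ≤ x → HasDerivAt v' (v'' x) x)
    (hv''neg : ∀ x, 0 ≤ x → v'' x < 0)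
    (hv0 : v 0 = 0)
    (hvM : v (r₀ * M) > c * M)
    (hfoc1 : v' (r₀ * M) < c / r₀)
    (u U : ℝ → ℝ)
    (hu : ∀ a, u a = v (r₀ * a) - c * a)
    (hUdef : ∀ a, U a = ((ρ + δ) * u a - β * θ * a * q) / (ρ + δ + β * θ * a))
    (hθpos : 0 < θ) (hθsmall : θ < (r₀ * v' 0 - c) * (ρ + δ) / (q * β)) :
    ∃ a, a ∈ Set.Ioo (0:ℝ) M ∧
      (r₀ * v' (r₀ * a) - c) * (ρ + δ + β * θ * a) - u a * (β * θ) - β * θ * q = 0 ∧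
      (∀ b ∈ Set.Ioo (0:ℝ) M,
        (r₀ * v' (r₀ * b) - c) * (ρ + δ + β * θ * b) - u b * (β * θ) - β * θ * q = 0 → b = a) ∧
      (∀ b ∈ Set.Icc (0:ℝ) M, b ≠ a → U b < U a) := by
  have hr₀x : ∀ x ∈ Icc 0 M, 0 ≤ r₀ * x := fun x hx => mul_nonneg hr₀.le hx.1
  have hu_deriv : ∀ x ∈ Icc 0 M, HasDerivAt u (r₀ * v' (r₀ * x) - c) x := fun x hx => by
    rw [funext hu]
    refine (hasDerivAt_comp_const_mul (hder1 _ (hr₀x x hx))).sub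
      ((hasDerivAt_id' x).const_mul c) |>.congr_deriv ?_
    ring
  have hu'_deriv : ∀ x ∈ Icc 0 M,
      HasDerivAt (fun a => r₀ * v' (r₀ * a) - c) (r₀ * (r₀ * v'' (r₀ * x))) x := fun x hx =>
    ((hasDerivAt_comp_const_mul (hder2 _ (hr₀x x hx))).const_mul r₀).sub_const c
  have hu'' : ∀ x ∈ Ioo 0 M, r₀ * (r₀ * v'' (r₀ * x)) < 0 := fun x hx =>
    mul_neg_of_pos_of_neg hr₀ <|
      mul_neg_of_pos_of_neg hr₀ (hv''neg _ (hr₀x x (Ioo_subset_Icc_self hx)))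
  have hF0 :
      0 < (r₀ * v' (r₀ * 0) - c) * (ρ + δ + β * θ * 0) - u 0 * (β * θ) - β * θ * q := by
    rw [lt_div_iff₀ (mul_pos hq hβ)] at hθsmall
    simp only [mul_zero, hu, hv0, sub_zero, add_zero, zero_mul]
    linarith
  have hFM : (r₀ * v' (r₀ * M) - c) * (ρ + δ + β * θ * M) - u M * (β * θ) - β * θ * q < 0 := by
    rw [lt_div_iff₀ hr₀] at hfoc1
    have hk : 0 < β * θ := mul_pos hβ hθpos
    have huM : 0 < u M := by rw [hu]; linarith
    nlinarith [mul_pos hk huM, mul_pos hk hq, mul_pos hk hM]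
  obtain ⟨a, ha, hFa, huniq, hmax⟩ := exists_unique_focResidual_eq_zero_isMax (by positivity)
    (mul_pos hβ hθpos).le hu_deriv hM hu'_deriv hu'' hF0 hFM
  exact ⟨a, ha, hFa, huniq, by simpa only [hUdef, discountedUtility] using hmax⟩

/-- when `0 < θ < (r₀v'(0)-c)(ρ+δ)/(qβ)`, the first-order condition has a
unique solution in `(0,M)`, which is the unique maximizer of the foresighted utility on `[0,M]`. -/
theorem positive_participation_optimal
    (r₀ c q ρ δ β M θ : ℝ) (v v' v'' : ℝ → ℝ)
    (hr₀ : 0 < r₀) (hc : 0 < c) (hq : 0 < q) (hρ : 0 < ρ) (hδ : 0 < δ) (hβ : 0 < β)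
    (hM : 0 < M)
    (hder1 : ∀ x, 0 ≤ x → HasDerivAt v (v' x) x)
    (hder2 : ∀ x, 0 ≤ x → HasDerivAt v' (v'' x) x)
    (hv'pos : ∀ x, 0 ≤ x → 0 < v' x)
    (hv''neg : ∀ x, 0 ≤ x → v'' x < 0)
    (hv0 : v 0 = 0)
    (hvM : v (r₀ * M) > c * M)
    (hfoc1 : v' (r₀ * M) < c / r₀) (hfoc2 : c / r₀ < v' 0)
    (u U : ℝ → ℝ)
    (hu : ∀ a, u a = v (r₀ * a) - c * a)
    (hUdef : ∀ a, U a = ((ρ + δ) * u a - β * θ * a * q) / (ρ + δ + β * θ * a))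
    (hθpos : 0 < θ) (hθsmall : θ < (r₀ * v' 0 - c) * (ρ + δ) / (q * β)) :
    ∃ a, a ∈ Set.Ioo (0:ℝ) M ∧
      (r₀ * v' (r₀ * a) - c) * (ρ + δ + β * θ * a) - u a * (β * θ) - β * θ * q = 0 ∧
      (∀ b ∈ Set.Ioo (0:ℝ) M,
        (r₀ * v' (r₀ * b) - c) * (ρ + δ + β * θ * b) - u b * (β * θ) - β * θ * q = 0 → b = a) ∧
      (∀ b ∈ Set.Icc (0:ℝ) M, b ≠ a → U b < U a) :=
  positive_participation_optimal_general r₀ c q ρ δ β M θ v v' v'' hr₀ hq hρ hδ hβ hM hder1 hder2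
    hv''neg hv0 hvM hfoc1 u U hu hUdef hθpos hθsmall
end

section
/- Under the same assumptions, the optimal participation level a*(θ), defined for θ ∈ (0, (r₀v'(0)-c)(ρ+δ)/(qβ)) as the unique solution in (0,M) of u'(a)(ρ+δ+βθa) - u(a)βθ - βθq = 0, is strictly decreasing in θ. -/
/-!
Write `U = u'`. The first-order condition says `U a * (ρ + δ) = β θ (u a - a U a + q)`.
Since `u` is concave, `U` is antitone, while the tangent-line intercept `u a - a U a` is monotone
on `[0, ∞)` and at least `u 0 = 0`. So the left side decreases and the right side increases in `a`,
and the right side also increases in `θ`: a larger `θ` forces a strictly smaller root.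
-/

open Set

lemma concaveOn_of_hasDerivAt2_nonpos {D : Set ℝ} (hD : Convex ℝ D) {f f' f'' : ℝ → ℝ}
    (hf : ∀ x ∈ D, HasDerivAt f (f' x) x) (hf' : ∀ x ∈ D, HasDerivAt f' (f'' x) x)
    (hf'' : ∀ x ∈ D, f'' x ≤ 0) : ConcaveOn ℝ D f :=
  concaveOn_of_hasDerivWithinAt2_nonpos hD
    (fun x hx => (hf x hx).continuousAt.continuousWithinAt)
    (fun x hx => (hf x (interior_subset hx)).hasDerivWithinAt)
    (fun x hx => (hf' x (interior_subset hx)).hasDerivWithinAt)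
    (fun x hx => hf'' x (interior_subset hx))

namespace ConcaveOn

variable {f f' : ℝ → ℝ}

lemma antitoneOn_of_hasDerivAt {S : Set ℝ} (hfc : ConcaveOn ℝ S f)
    (hf : ∀ x ∈ S, HasDerivAt f (f' x) x) : AntitoneOn f' S :=
  (hfc.antitoneOn_deriv fun x hx => (hf x hx).differentiableAt).congr
    fun x hx => (hf x hx).deriv

lemma monotoneOn_sub_mul_of_hasDerivAt (hfc : ConcaveOn ℝ (Ici 0) f)
    (hf : ∀ x ∈ Ici (0 : ℝ), HasDerivAt f (f' x) x) :
    MonotoneOn (fun x => f x - x * f' x) (Ici 0) := by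
  intro x hx y hy hxy
  rcases hxy.eq_or_lt with rfl | hlt
  · rfl
  have hslope : f' y * (y - x) ≤ f y - f x := by
    have := hfc.le_slope_of_hasDerivAt hx hy hlt (hf y hy)
    rwa [slope_def_field, le_div_iff₀ (sub_pos.2 hlt)] at this
  have hanti : f' y ≤ f' x := hfc.antitoneOn_of_hasDerivAt hf hx hy hlt.le
  nlinarith [mul_le_mul_of_nonneg_left hanti (mem_Ici.1 hx)]

end ConcaveOn

lemma lt_of_mul_eq_mul_of_antitoneOn_of_monotoneOn {α : Type*} [LinearOrder α] {s : Set α}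
    {U G : α → ℝ} {K θ₁ θ₂ : ℝ} {a₁ a₂ : α} (hU : AntitoneOn U s) (hG : MonotoneOn G s)
    (hK : 0 ≤ K) (hθ₁ : 0 ≤ θ₁) (hθ : θ₁ < θ₂) (hG₂ : 0 < G a₂) (ha₁ : a₁ ∈ s) (ha₂ : a₂ ∈ s)
    (h₁ : U a₁ * K = θ₁ * G a₁) (h₂ : U a₂ * K = θ₂ * G a₂) : a₂ < a₁ := by
  by_contra! h
  have := calc
    θ₂ * G a₂ = U a₂ * K := h₂.symm
    _ ≤ U a₁ * K := mul_le_mul_of_nonneg_right (hU ha₁ ha₂ h) hK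
    _ = θ₁ * G a₁ := h₁
    _ ≤ θ₁ * G a₂ := mul_le_mul_of_nonneg_left (hG ha₁ ha₂ h) hθ₁
    _ < θ₂ * G a₂ := mul_lt_mul_of_pos_right hθ hG₂
  exact lt_irrefl _ this

theorem optimal_participation_strictAnti_in_theta_general
    (r₀ c q ρ δ β M : ℝ) (v v' v'' : ℝ → ℝ)
    (hr₀ : 0 < r₀) (hq : 0 < q) (hρ : 0 < ρ) (hδ : 0 < δ) (hβ : 0 < β)
    (hder1 : ∀ x, 0 ≤ x → HasDerivAt v (v' x) x)
    (hder2 : ∀ x, 0 ≤ x → HasDerivAt v' (v'' x) x)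
    (hv''neg : ∀ x, 0 ≤ x → v'' x < 0)
    (hv0 : v 0 = 0)
    (u : ℝ → ℝ) (hu : ∀ a, u a = v (r₀ * a) - c * a)
    (θ₁ θ₂ a₁ a₂ : ℝ)
    (hθ₁ : 0 < θ₁) (hθ₁₂ : θ₁ < θ₂)
    (ha₁ : a₁ ∈ Set.Ioo (0:ℝ) M) (ha₂ : a₂ ∈ Set.Ioo (0:ℝ) M)
    (hfoc₁ : (r₀ * v' (r₀ * a₁) - c) * (ρ + δ + β * θ₁ * a₁) - u a₁ * (β * θ₁) - β * θ₁ * q = 0)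
    (hfoc₂ : (r₀ * v' (r₀ * a₂) - c) * (ρ + δ + β * θ₂ * a₂) - u a₂ * (β * θ₂) - β * θ₂ * q = 0) :
    a₂ < a₁ := by
  set U : ℝ → ℝ := fun a => r₀ * v' (r₀ * a) - c
  have hu' : ∀ a ∈ Ici (0 : ℝ), HasDerivAt u (U a) a := fun a ha => by
    have hv : HasDerivAt (fun x => v (r₀ * x)) (v' (r₀ * a) * r₀) a :=
      (hder1 _ (mul_nonneg hr₀.le ha)).comp a (hasDerivAt_const_mul r₀)
    rw [show u = fun x => v (r₀ * x) - c * x from funext hu]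
    exact (hv.sub (hasDerivAt_const_mul c)).congr_deriv (by simp only [U]; ring)
  have hU' : ∀ a ∈ Ici (0 : ℝ), HasDerivAt U (r₀ * (v'' (r₀ * a) * r₀)) a := fun a ha =>
    (((hder2 _ (mul_nonneg hr₀.le ha)).comp a (hasDerivAt_const_mul r₀)).const_mul r₀).sub_const c
  have hconc : ConcaveOn ℝ (Ici 0) u :=
    concaveOn_of_hasDerivAt2_nonpos (convex_Ici 0) hu' hU' fun a ha =>
      mul_nonpos_of_nonneg_of_nonpos hr₀.le
        (mul_nonpos_of_nonpos_of_nonneg (hv''neg _ (mul_nonneg hr₀.le ha)).le hr₀.le)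
  have hintercept := (hconc.monotoneOn_sub_mul_of_hasDerivAt hu').add_const q
  have hu0 : u 0 = 0 := by simp [hu, hv0]
  have ha₁' : a₁ ∈ Ici 0 := ha₁.1.le
  have ha₂' : a₂ ∈ Ici 0 := ha₂.1.le
  have hpos : 0 < u a₂ - a₂ * U a₂ + q := by
    have := hintercept self_mem_Ici ha₂' ha₂'
    simp only [hu0, zero_mul, sub_zero] at this
    linarith
  exact lt_of_mul_eq_mul_of_antitoneOn_of_monotoneOn (K := ρ + δ)
    (hconc.antitoneOn_of_hasDerivAt hu') hintercept (by positivity) (by positivity)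
    (mul_lt_mul_of_pos_left hθ₁₂ hβ) hpos ha₁' ha₂'
    (by linear_combination hfoc₁) (by linear_combination hfoc₂)

/-- the optimal participation level `a*(θ)` (the unique solution in `(0,M)` of the
first-order condition) is strictly decreasing in `θ`. -/
theorem optimal_participation_strictAnti_in_theta
    (r₀ c q ρ δ β M : ℝ) (v v' v'' : ℝ → ℝ)
    (hr₀ : 0 < r₀) (hc : 0 < c) (hq : 0 < q) (hρ : 0 < ρ) (hδ : 0 < δ) (hβ : 0 < β)
    (hM : 0 < M)
    (hder1 : ∀ x, 0 ≤ x → HasDerivAt v (v' x) x)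
    (hder2 : ∀ x, 0 ≤ x → HasDerivAt v' (v'' x) x)
    (hv'pos : ∀ x, 0 ≤ x → 0 < v' x)
    (hv''neg : ∀ x, 0 ≤ x → v'' x < 0)
    (hv0 : v 0 = 0)
    (hvM : v (r₀ * M) > c * M)
    (hfoc1 : v' (r₀ * M) < c / r₀) (hfoc2 : c / r₀ < v' 0)
    (u : ℝ → ℝ) (hu : ∀ a, u a = v (r₀ * a) - c * a)
    (θ₁ θ₂ a₁ a₂ : ℝ)
    (hθ₁ : 0 < θ₁) (hθ₁₂ : θ₁ < θ₂) (hθ₂ : θ₂ < (r₀ * v' 0 - c) * (ρ + δ) / (q * β))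
    (ha₁ : a₁ ∈ Set.Ioo (0:ℝ) M) (ha₂ : a₂ ∈ Set.Ioo (0:ℝ) M)
    (hfoc₁ : (r₀ * v' (r₀ * a₁) - c) * (ρ + δ + β * θ₁ * a₁) - u a₁ * (β * θ₁) - β * θ₁ * q = 0)
    (hfoc₂ : (r₀ * v' (r₀ * a₂) - c) * (ρ + δ + β * θ₂ * a₂) - u a₂ * (β * θ₂) - β * θ₂ * q = 0) :
    a₂ < a₁ :=
  optimal_participation_strictAnti_in_theta_general r₀ c q ρ δ β M v v' v'' hr₀ hq hρ hδ hβ hder1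
    hder2 hv''neg hv0 u hu θ₁ θ₂ a₁ a₂ hθ₁ hθ₁₂ ha₁ ha₂ hfoc₁ hfoc₂
end

section
/- Under the same assumptions, for fixed θ ∈ (0,1] with θ < (r₀v'(0)-c)(ρ+δ)/(qβ), the optimal participation level a* characterized by (u(a*)+q)/u'(a*) - a* = (ρ+δ)/(βθ) is strictly increasing in ρ and in δ, and strictly decreasing in β. -/
/-- The first-order characterization `(u(a)+q)/u'(a) - a = (ρ+δ)/(βθ)` of the optimal
participation level, with `u(a) = v(r₀a) - ca` and `u'(a) = r₀ v'(r₀ a) - c`. -/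
def FOCchar (r₀ c q : ℝ) (v v' : ℝ → ℝ) (ρ δ β θ a : ℝ) : Prop :=
  ((v (r₀ * a) - c * a) + q) / (r₀ * v' (r₀ * a) - c) - a = (ρ + δ) / (β * θ)

/-!
Write `U = u + q`. Since `U'' < 0`, `U` is concave on `[0, M]`, and `U(0) = q`, `U(M) > q` give
`U > 0` there. A solution of `U(a)/U'(a) - a = k` with `k > 0` therefore has `U'(a) > 0`, and
between two such solutions `U' > 0` as well, `U'` being decreasing. On that range
`(U/U' - id)' = -U U''/U'^2 > 0`, so the left-hand side is strictly increasing in `a`: larger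
`k = (ρ+δ)/(βθ)` forces larger `a`.
-/

open Set

theorem HasDerivAt.comp_const_mul {f : ℝ → ℝ} {f' r x : ℝ} (hf : HasDerivAt f f' (r * x)) :
    HasDerivAt (fun y => f (r * y)) (r * f') x := by
  have h := hf.comp x (hasDerivAt_const_mul r)
  rwa [mul_comm] at h

section DivDerivSubId

variable {f f' f'' : ℝ → ℝ}

theorem strictMonoOn_div_deriv_sub_id {a b : ℝ}
    (hf : ∀ x ∈ Icc a b, HasDerivAt f (f' x) x)
    (hf' : ∀ x ∈ Icc a b, HasDerivAt f' (f'' x) x)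
    (hf''_neg : ∀ x ∈ Icc a b, f'' x < 0)
    (hf_pos : ∀ x ∈ Icc a b, 0 < f x) (hf'b : 0 < f' b) :
    StrictMonoOn (fun x => f x / f' x - x) (Icc a b) := by
  have hf'_anti : StrictAntiOn f' (Icc a b) :=
    strictAntiOn_of_hasDerivWithinAt_neg (convex_Icc a b)
      (fun x hx => (hf' x hx).continuousAt.continuousWithinAt)
      (fun x hx => (hf' x (interior_subset hx)).hasDerivWithinAt)
      (fun x hx => hf''_neg x (interior_subset hx))
  have hf'_pos : ∀ x ∈ Icc a b, 0 < f' x := fun x hx =>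
    hf'b.trans_le (hf'_anti.antitoneOn hx (right_mem_Icc.mpr (hx.1.trans hx.2)) hx.2)
  have hderiv : ∀ x ∈ Icc a b, HasDerivAt (fun x => f x / f' x - x)
      ((f' x * f' x - f x * f'' x) / f' x ^ 2 - 1) x := fun x hx =>
    ((hf x hx).div (hf' x hx) (hf'_pos x hx).ne').sub (hasDerivAt_id x)
  refine strictMonoOn_of_hasDerivWithinAt_pos (convex_Icc a b)
    (fun x hx => (hderiv x hx).continuousAt.continuousWithinAt)
    (fun x hx => (hderiv x (interior_subset hx)).hasDerivWithinAt) fun x hx => ?_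
  replace hx := interior_subset hx
  have hf'x := hf'_pos x hx
  have hderiv_eq : (f' x * f' x - f x * f'' x) / f' x ^ 2 - 1 = -(f x * f'' x) / f' x ^ 2 := by
    field_simp
    ring
  rw [hderiv_eq]
  exact div_pos (neg_pos.mpr (mul_neg_of_pos_of_neg (hf_pos x hx) (hf''_neg x hx)))
    (by positivity)

theorem lt_of_div_deriv_sub_id_lt {l r a₁ a₂ : ℝ}
    (hf : ∀ x ∈ Icc l r, HasDerivAt f (f' x) x)
    (hf' : ∀ x ∈ Icc l r, HasDerivAt f' (f'' x) x)
    (hf''_neg : ∀ x ∈ Icc l r, f'' x < 0)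
    (hf_pos : ∀ x ∈ Icc l r, 0 < f x)
    (ha₁ : a₁ ∈ Icc l r) (ha₂ : a₂ ∈ Icc l r) (hf'a₁ : 0 < f' a₁)
    (h : f a₁ / f' a₁ - a₁ < f a₂ / f' a₂ - a₂) : a₁ < a₂ := by
  by_contra! hle
  have hsub : Icc a₂ a₁ ⊆ Icc l r := Icc_subset_Icc ha₂.1 ha₁.2
  have hmono := strictMonoOn_div_deriv_sub_id (fun x hx => hf x (hsub hx))
    (fun x hx => hf' x (hsub hx)) (fun x hx => hf''_neg x (hsub hx))
    (fun x hx => hf_pos x (hsub hx)) hf'a₁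
  exact h.not_ge (hmono.monotoneOn (left_mem_Icc.mpr hle) (right_mem_Icc.mpr hle) hle)

end DivDerivSubId

section Participation

variable {r₀ c q M : ℝ} {v v' v'' : ℝ → ℝ}

theorem hasDerivAt_utility (hder1 : ∀ x, 0 ≤ x → HasDerivAt v (v' x) x) {a : ℝ}
    (ha : 0 ≤ r₀ * a) :
    HasDerivAt (fun a => v (r₀ * a) - c * a + q) (r₀ * v' (r₀ * a) - c) a :=
  ((hder1 _ ha).comp_const_mul.sub (hasDerivAt_const_mul c)).add_const q

theorem hasDerivAt_marginal_utility (hder2 : ∀ x, 0 ≤ x → HasDerivAt v' (v'' x) x) {a : ℝ}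
    (ha : 0 ≤ r₀ * a) :
    HasDerivAt (fun a => r₀ * v' (r₀ * a) - c) (r₀ * (r₀ * v'' (r₀ * a))) a :=
  ((hder2 _ ha).comp_const_mul.const_mul r₀).sub_const c

theorem utility_add_pos (hr₀ : 0 < r₀) (hq : 0 < q)
    (hder1 : ∀ x, 0 ≤ x → HasDerivAt v (v' x) x)
    (hder2 : ∀ x, 0 ≤ x → HasDerivAt v' (v'' x) x)
    (hv''neg : ∀ x, 0 ≤ x → v'' x < 0) (hv0 : v 0 = 0) (hvM : v (r₀ * M) > c * M) :
    ∀ a ∈ Icc 0 M, 0 < v (r₀ * a) - c * a + q := by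
  have hnonneg : ∀ x ∈ Ici (0 : ℝ), 0 ≤ r₀ * x := fun x hx => mul_nonneg hr₀.le hx
  have hconcave : ConcaveOn ℝ (Ici 0) (fun a => v (r₀ * a) - c * a + q) := by
    refine concaveOn_of_hasDerivWithinAt2_nonpos (convex_Ici 0)
      (fun x hx => (hasDerivAt_utility hder1 (hnonneg x hx)).continuousAt.continuousWithinAt)
      (fun x hx => (hasDerivAt_utility hder1 (hnonneg x (interior_subset hx))).hasDerivWithinAt)
      (fun x hx => (hasDerivAt_marginal_utility hder2
        (hnonneg x (interior_subset hx))).hasDerivWithinAt) fun x hx => ?_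
    exact (mul_neg_of_pos_of_neg hr₀ (mul_neg_of_pos_of_neg hr₀
      (hv''neg _ (hnonneg x (interior_subset hx))))).le
  intro a ha
  have hmin := hconcave.min_le_of_mem_Icc (mem_Ici.mpr le_rfl) (mem_Ici.mpr (ha.1.trans ha.2)) ha
  simp only [mul_zero, hv0, sub_zero, zero_add] at hmin
  exact (lt_min hq (by linarith)).trans_le hmin

theorem foc_root_lt_of_lt (hr₀ : 0 < r₀) (hq : 0 < q)
    (hder1 : ∀ x, 0 ≤ x → HasDerivAt v (v' x) x)
    (hder2 : ∀ x, 0 ≤ x → HasDerivAt v' (v'' x) x)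
    (hv''neg : ∀ x, 0 ≤ x → v'' x < 0) (hv0 : v 0 = 0) (hvM : v (r₀ * M) > c * M)
    {k₁ k₂ a₁ a₂ : ℝ} (hk₁ : 0 < k₁) (hk : k₁ < k₂)
    (ha₁ : a₁ ∈ Ioo 0 M) (ha₂ : a₂ ∈ Ioo 0 M)
    (h₁ : (v (r₀ * a₁) - c * a₁ + q) / (r₀ * v' (r₀ * a₁) - c) - a₁ = k₁)
    (h₂ : (v (r₀ * a₂) - c * a₂ + q) / (r₀ * v' (r₀ * a₂) - c) - a₂ = k₂) :
    a₁ < a₂ := by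
  have hpos := utility_add_pos hr₀ hq hder1 hder2 hv''neg hv0 hvM
  have hnonneg : ∀ x ∈ Icc 0 M, 0 ≤ r₀ * x := fun x hx => mul_nonneg hr₀.le hx.1
  have hmarg₁ : 0 < r₀ * v' (r₀ * a₁) - c :=
    (div_pos_iff_of_pos_left (hpos a₁ (Ioo_subset_Icc_self ha₁))).mp (by linarith [ha₁.1])
  exact lt_of_div_deriv_sub_id_lt (fun x hx => hasDerivAt_utility hder1 (hnonneg x hx))
    (fun x hx => hasDerivAt_marginal_utility hder2 (hnonneg x hx))
    (fun x hx => mul_neg_of_pos_of_neg hr₀ (mul_neg_of_pos_of_neg hr₀ (hv''neg _ (hnonneg x hx))))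
    hpos (Ioo_subset_Icc_self ha₁) (Ioo_subset_Icc_self ha₂) hmarg₁ (by rw [h₁, h₂]; exact hk)

end Participation

theorem optimal_participation_monotone_in_params_general
    (r₀ c q M θ ρ δ β : ℝ) (v v' v'' : ℝ → ℝ)
    (hr₀ : 0 < r₀) (hq : 0 < q)
    (hρ : 0 < ρ) (hδ : 0 < δ) (hβ : 0 < β)
    (hθ : θ ∈ Set.Ioc (0:ℝ) 1)
    (hder1 : ∀ x, 0 ≤ x → HasDerivAt v (v' x) x)
    (hder2 : ∀ x, 0 ≤ x → HasDerivAt v' (v'' x) x)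
    (hv''neg : ∀ x, 0 ≤ x → v'' x < 0)
    (hv0 : v 0 = 0)
    (hvM : v (r₀ * M) > c * M) :
    (∀ ρ₁ ρ₂ a₁ a₂ : ℝ, 0 < ρ₁ → ρ₁ < ρ₂ →
      θ < (r₀ * v' 0 - c) * (ρ₁ + δ) / (q * β) →
      a₁ ∈ Set.Ioo (0:ℝ) M → a₂ ∈ Set.Ioo (0:ℝ) M →
      FOCchar r₀ c q v v' ρ₁ δ β θ a₁ → FOCchar r₀ c q v v' ρ₂ δ β θ a₂ → a₁ < a₂) ∧
    (∀ δ₁ δ₂ a₁ a₂ : ℝ, 0 < δ₁ → δ₁ < δ₂ →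
      θ < (r₀ * v' 0 - c) * (ρ + δ₁) / (q * β) →
      a₁ ∈ Set.Ioo (0:ℝ) M → a₂ ∈ Set.Ioo (0:ℝ) M →
      FOCchar r₀ c q v v' ρ δ₁ β θ a₁ → FOCchar r₀ c q v v' ρ δ₂ β θ a₂ → a₁ < a₂) ∧
    (∀ β₁ β₂ a₁ a₂ : ℝ, 0 < β₁ → β₁ < β₂ →
      θ < (r₀ * v' 0 - c) * (ρ + δ) / (q * β₁) →
      a₁ ∈ Set.Ioo (0:ℝ) M → a₂ ∈ Set.Ioo (0:ℝ) M →
      FOCchar r₀ c q v v' ρ δ β₁ θ a₁ → FOCchar r₀ c q v v' ρ δ β₂ θ a₂ → a₂ < a₁) := by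
  have hθ₀ : 0 < θ := hθ.1
  have key := @foc_root_lt_of_lt r₀ c q M v v' v'' hr₀ hq hder1 hder2 hv''neg hv0 hvM
  refine ⟨?_, ?_, ?_⟩
  · intro ρ₁ ρ₂ a₁ a₂ hρ₁ hρ₁₂ _ ha₁ ha₂ h₁ h₂
    exact key (by positivity) (by gcongr) ha₁ ha₂ h₁ h₂
  · intro δ₁ δ₂ a₁ a₂ hδ₁ hδ₁₂ _ ha₁ ha₂ h₁ h₂
    exact key (by positivity) (by gcongr) ha₁ ha₂ h₁ h₂
  · intro β₁ β₂ a₁ a₂ hβ₁ hβ₁₂ _ ha₁ ha₂ h₁ h₂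
    have hβ₂ : 0 < β₂ := hβ₁.trans hβ₁₂
    exact key (by positivity) (by gcongr) ha₂ ha₁ h₂ h₁

/-- the optimal participation level is strictly increasing in `ρ` and `δ` and
strictly decreasing in `β`. -/
theorem optimal_participation_monotone_in_params
    (r₀ c q M θ ρ δ β : ℝ) (v v' v'' : ℝ → ℝ)
    (hr₀ : 0 < r₀) (hc : 0 < c) (hq : 0 < q) (hM : 0 < M)
    (hρ : 0 < ρ) (hδ : 0 < δ) (hβ : 0 < β)
    (hθ : θ ∈ Set.Ioc (0:ℝ) 1)
    (hder1 : ∀ x, 0 ≤ x → HasDerivAt v (v' x) x)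
    (hder2 : ∀ x, 0 ≤ x → HasDerivAt v' (v'' x) x)
    (hv'pos : ∀ x, 0 ≤ x → 0 < v' x)
    (hv''neg : ∀ x, 0 ≤ x → v'' x < 0)
    (hv0 : v 0 = 0)
    (hvM : v (r₀ * M) > c * M)
    (hfoc1 : v' (r₀ * M) < c / r₀) (hfoc2 : c / r₀ < v' 0) :
    (∀ ρ₁ ρ₂ a₁ a₂ : ℝ, 0 < ρ₁ → ρ₁ < ρ₂ →
      θ < (r₀ * v' 0 - c) * (ρ₁ + δ) / (q * β) →
      a₁ ∈ Set.Ioo (0:ℝ) M → a₂ ∈ Set.Ioo (0:ℝ) M →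
      FOCchar r₀ c q v v' ρ₁ δ β θ a₁ → FOCchar r₀ c q v v' ρ₂ δ β θ a₂ → a₁ < a₂) ∧
    (∀ δ₁ δ₂ a₁ a₂ : ℝ, 0 < δ₁ → δ₁ < δ₂ →
      θ < (r₀ * v' 0 - c) * (ρ + δ₁) / (q * β) →
      a₁ ∈ Set.Ioo (0:ℝ) M → a₂ ∈ Set.Ioo (0:ℝ) M →
      FOCchar r₀ c q v v' ρ δ₁ β θ a₁ → FOCchar r₀ c q v v' ρ δ₂ β θ a₂ → a₁ < a₂) ∧
    (∀ β₁ β₂ a₁ a₂ : ℝ, 0 < β₁ → β₁ < β₂ →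
      θ < (r₀ * v' 0 - c) * (ρ + δ) / (q * β₁) →
      a₁ ∈ Set.Ioo (0:ℝ) M → a₂ ∈ Set.Ioo (0:ℝ) M →
      FOCchar r₀ c q v v' ρ δ β₁ θ a₁ → FOCchar r₀ c q v v' ρ δ β₂ θ a₂ → a₂ < a₁) :=
  optimal_participation_monotone_in_params_general r₀ c q M θ ρ δ β v v' v'' hr₀ hq hρ hδ hβ hθ
    hder1 hder2 hv''neg hv0 hvM
end

section
/- Consider the ODE dθ/dt = θ((1-θ)βa - δ) on [0,1] with constant participation level a > 0 and β, δ > 0, with initial condition θ(0) = θ₀ ∈ (0,1]. If β/δ ≤ 1/a, then θ(t) → 0 as t → ∞; if β/δ > 1/a, then θ(t) → 1 - δ/(βa) as t → ∞. -/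
/-!
A Grönwall comparison with `θ' ≥ -δ θ` shows that `θ` stays positive, so `u = 1/θ` is defined;
it satisfies the linear equation `u' = βa - (βa - δ) u` (Bernoulli substitution).
If `βa ≤ δ` then `u' ≥ βa > 0`, so `u → ∞` and `θ → 0`. If `βa > δ` then `u - βa/(βa - δ)`
decays like `exp (-(βa - δ) t)`, so `θ → (βa - δ)/(βa) = 1 - δ/(βa)`.
-/

open Filter Set Real Topology

lemma le_gronwallBound_of_hasDerivAt_Ici {f f' : ℝ → ℝ} {K ε a : ℝ}
    (hf : ∀ t, a ≤ t → HasDerivAt f (f' t) t) (bound : ∀ t, a ≤ t → f' t ≤ K * f t + ε)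
    {t : ℝ} (ht : a ≤ t) : f t ≤ gronwallBound (f a) K ε (t - a) :=
  le_gronwallBound_of_liminf_deriv_right_le (b := t)
    (fun s hs => (hf s hs.1).continuousAt.continuousWithinAt)
    (fun s hs _ hr => (hf s hs.1).hasDerivWithinAt.liminf_right_slope_le hr) le_rfl
    (fun s hs => bound s hs.1) t ⟨ht, le_rfl⟩

lemma eq_mul_exp_of_hasDerivAt_Ici {f : ℝ → ℝ} {K a : ℝ}
    (hf : ∀ t, a ≤ t → HasDerivAt f (K * f t) t) {t : ℝ} (ht : a ≤ t) :
    f t = f a * exp (K * (t - a)) := by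
  have upper := le_gronwallBound_of_hasDerivAt_Ici (ε := 0) hf (fun s _ => by rw [add_zero]) ht
  have lower := le_gronwallBound_of_hasDerivAt_Ici (f := -f) (K := K) (ε := 0)
    (fun s hs => (hf s hs).neg) (fun s _ => by simp) ht
  rw [gronwallBound_ε0] at upper lower
  simp only [Pi.neg_apply, neg_mul] at lower
  linarith

lemma tendsto_atTop_of_hasDerivAt_ge {f f' : ℝ → ℝ} {c a : ℝ} (hc : 0 < c)
    (hf : ∀ t, a ≤ t → HasDerivAt f (f' t) t) (hf' : ∀ t, a ≤ t → c ≤ f' t) :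
    Tendsto f atTop atTop := by
  have lower : ∀ t, a ≤ t → f a + c * (t - a) ≤ f t := by
    intro t ht
    have := le_gronwallBound_of_hasDerivAt_Ici (f := -f) (K := 0) (ε := -c)
      (fun s hs => (hf s hs).neg) (fun s hs => by simpa using hf' s hs) ht
    rw [gronwallBound_K0] at this
    simp only [Pi.neg_apply] at this
    linarith
  refine tendsto_atTop_mono' _ (eventually_ge_atTop a |>.mono lower) ?_
  exact tendsto_atTop_add_const_left _ _
    ((tendsto_atTop_add_const_right _ _ tendsto_id).const_mul_atTop hc)

section SIS

variable {θ : ℝ → ℝ} {b δ : ℝ}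

lemma sis_ge_mul_exp (hb : 0 ≤ b) (hmem : ∀ t, 0 ≤ t → θ t ∈ Icc (0 : ℝ) 1)
    (hode : ∀ t, 0 ≤ t → HasDerivAt θ (θ t * ((1 - θ t) * b - δ)) t)
    {t : ℝ} (ht : 0 ≤ t) : θ 0 * exp (-δ * t) ≤ θ t := by
  have := le_gronwallBound_of_hasDerivAt_Ici (f := -θ) (K := -δ) (ε := 0)
    (fun s hs => (hode s hs).neg) (fun s hs => by
      obtain ⟨h0s, h1s⟩ := hmem s hs
      have : 0 ≤ θ s * (1 - θ s) * b := by have := sub_nonneg.2 h1s; positivity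
      simp only [Pi.neg_apply]
      linarith) ht
  rw [gronwallBound_ε0] at this
  simp only [Pi.neg_apply, sub_zero] at this
  linarith

lemma sis_inv_hasDerivAt {t : ℝ} (hθ : HasDerivAt θ (θ t * ((1 - θ t) * b - δ)) t)
    (hne : θ t ≠ 0) : HasDerivAt θ⁻¹ (b - (b - δ) * (θ t)⁻¹) t := by
  refine (hθ.inv hne).congr_deriv ?_
  field_simp
  ring

theorem sis_tendsto_zero (hb : 0 < b) (hbδ : b ≤ δ)
    (hode : ∀ t, 0 ≤ t → HasDerivAt θ (θ t * ((1 - θ t) * b - δ)) t)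
    (hpos : ∀ t, 0 ≤ t → 0 < θ t) : Tendsto θ atTop (𝓝 0) := by
  have hinv : Tendsto θ⁻¹ atTop atTop :=
    tendsto_atTop_of_hasDerivAt_ge hb (fun t ht => sis_inv_hasDerivAt (hode t ht) (hpos t ht).ne')
      (fun t ht => by
        have : (b - δ) * (θ t)⁻¹ ≤ 0 :=
          mul_nonpos_of_nonpos_of_nonneg (by linarith) (inv_pos.2 (hpos t ht)).le
        linarith)
  simpa using hinv.inv_tendsto_atTop

theorem sis_tendsto_endemic (hb : 0 < b) (hδb : δ < b)
    (hode : ∀ t, 0 ≤ t → HasDerivAt θ (θ t * ((1 - θ t) * b - δ)) t)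
    (hpos : ∀ t, 0 ≤ t → 0 < θ t) : Tendsto θ atTop (𝓝 ((b - δ) / b)) := by
  have hr : b - δ ≠ 0 := by linarith
  set w : ℝ → ℝ := θ⁻¹ - fun _ => b / (b - δ)
  have hw : ∀ t, 0 ≤ t → HasDerivAt w (-(b - δ) * w t) t := fun t ht => by
    refine ((sis_inv_hasDerivAt (hode t ht) (hpos t ht).ne').sub_const (b / (b - δ))).congr_deriv ?_
    simp only [w, Pi.sub_apply, Pi.inv_apply]
    field_simp
    ring
  have hu : ∀ᶠ t in atTop, b / (b - δ) + w 0 * exp (-(b - δ) * t) = (θ t)⁻¹ := by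
    filter_upwards [eventually_ge_atTop 0] with t ht
    have hwt := eq_mul_exp_of_hasDerivAt_Ici hw ht
    rw [sub_zero] at hwt
    rw [← hwt]
    simp [w]
  have hexp : Tendsto (fun t => exp (-(b - δ) * t)) atTop (𝓝 0) :=
    tendsto_exp_atBot.comp (tendsto_id.const_mul_atTop_of_neg (by linarith))
  have hlim := ((hexp.const_mul (w 0)).const_add (b / (b - δ))).congr' hu
  rw [mul_zero, add_zero] at hlim
  simpa using hlim.inv₀ (div_ne_zero hb.ne' hr)

end SIS

/-- SIS dynamics with a fixed common participation level `a`: below the critical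
effective infection rate `1/a` the infection dies out, above it the state converges
to `1 - δ/(βa)`. -/
theorem sis_fixed_action_convergence
    (β δ a : ℝ) (hβ : 0 < β) (hδ : 0 < δ) (ha : 0 < a)
    (θ : ℝ → ℝ) (hθ0 : θ 0 ∈ Set.Ioc (0:ℝ) 1)
    (hmem : ∀ t, 0 ≤ t → θ t ∈ Set.Icc (0:ℝ) 1)
    (hode : ∀ t, 0 ≤ t → HasDerivAt θ (θ t * ((1 - θ t) * β * a - δ)) t) :
    (β / δ ≤ 1 / a → Filter.Tendsto θ Filter.atTop (nhds 0)) ∧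
    (β / δ > 1 / a → Filter.Tendsto θ Filter.atTop (nhds (1 - δ / (β * a)))) := by
  have hode' : ∀ t, 0 ≤ t → HasDerivAt θ (θ t * ((1 - θ t) * (β * a) - δ)) t := by
    simpa only [mul_assoc] using hode
  have hpos : ∀ t, 0 ≤ t → 0 < θ t := fun t ht =>
    (mul_pos hθ0.1 (exp_pos _)).trans_le (sis_ge_mul_exp (by positivity) hmem hode' ht)
  refine ⟨fun h => ?_, fun h => ?_⟩
  · rw [div_le_div_iff₀ hδ ha, one_mul] at h
    exact sis_tendsto_zero (by positivity) h hode' hpos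
  · rw [gt_iff_lt, div_lt_div_iff₀ ha hδ, one_mul] at h
    convert sis_tendsto_endemic (by positivity) h hode' hpos using 2
    field_simp
end

section
/- Let a*: [0,1] → [0,M] be continuous, nonincreasing, with a*(θ) = 0 for θ ≥ θ̄ (for some θ̄ ∈ (0,1]), and a*(0) = a^AF > 0. Consider dθ/dt = θ((1-θ)βa*(θ) - δ) with θ(0) ∈ (0,1]. If β a^AF < δ, then θ(t) → 0. If β a^AF ≥ δ, assume additionally θ ↦ (1-θ)βa*(θ) - δ is strictly decreasing on [0, θ̄); then there exists a unique θ† ∈ [0, θ̄) with (1-θ†)βa*(θ†) = δ, and θ(t) → θ† as t → ∞ for any initial condition θ(0) ∈ (0,1]. -/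
/-!
The state solves `θ' = θ g(θ)` with `g s = (1 - s) β a*(s) - δ`. If `β a^AF < δ` then `g < 0`
on `[0, 1]`; if `β a^AF ≥ δ` then `g` changes sign exactly once on `[0, 1]`, at `θ†`, by the
intermediate value theorem and strict monotonicity. Either way the drift `θ g(θ)` is positive
between `0` and the stable equilibrium and negative above it, so a trajectory started in `(0, 1]`
cannot cross that equilibrium, is monotone, and converges. Its limit is an equilibrium (the
derivative tends to the drift at the limit, which must vanish since `θ` converges), and the
sign conditions leave only the stable one.
-/

open Set Filter Topology

theorem MonotoneOn.exists_tendsto_atTop_of_bddAbove {α β : Type*} [Preorder α]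
    [IsDirectedOrder α] [ConditionallyCompleteLinearOrder β] [TopologicalSpace β]
    [OrderTopology β] {f : α → β} {a : α} (hf : MonotoneOn f (Ici a))
    (hbdd : BddAbove (f '' Ici a)) : ∃ L, Tendsto f atTop (𝓝 L) := by
  refine ⟨⨆ t : Ici a, f t, tendsto_comp_val_Ici_atTop.1 (tendsto_atTop_ciSup ?_ ?_)⟩
  · exact fun s t hst => hf s.2 t.2 hst
  · rwa [← image_eq_range]

theorem exists_tendsto_of_hasDerivAt_nonneg {f f' : ℝ → ℝ} {b : ℝ}
    (hf : ∀ t, 0 ≤ t → HasDerivAt f (f' t) t) (hf' : ∀ t, 0 ≤ t → 0 ≤ f' t)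
    (hb : ∀ t, 0 ≤ t → f t ≤ b) : ∃ L, Tendsto f atTop (𝓝 L) := by
  have hmono : MonotoneOn f (Ici 0) := by
    refine monotoneOn_of_hasDerivWithinAt_nonneg (f' := f') (convex_Ici 0)
      (fun t ht => (hf t ht).continuousAt.continuousWithinAt) (fun t ht => ?_) fun t ht => ?_
    all_goals rw [interior_Ici] at ht
    exacts [(hf t ht.le).hasDerivWithinAt, hf' t ht.le]
  exact hmono.exists_tendsto_atTop_of_bddAbove ⟨b, forall_mem_image.2 hb⟩

theorem exists_tendsto_of_hasDerivAt_nonpos {f f' : ℝ → ℝ} {a : ℝ}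
    (hf : ∀ t, 0 ≤ t → HasDerivAt f (f' t) t) (hf' : ∀ t, 0 ≤ t → f' t ≤ 0)
    (ha : ∀ t, 0 ≤ t → a ≤ f t) : ∃ L, Tendsto f atTop (𝓝 L) := by
  obtain ⟨L, hL⟩ := exists_tendsto_of_hasDerivAt_nonneg (f := -f) (b := -a)
    (fun t ht => (hf t ht).neg) (fun t ht => neg_nonneg.2 (hf' t ht))
    (fun t ht => neg_le_neg (ha t ht))
  exact ⟨-L, by simpa using hL.neg⟩

theorem eq_zero_of_tendsto_of_tendsto_deriv {f f' : ℝ → ℝ} {a l : ℝ}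
    (hf : ∀ᶠ t in atTop, HasDerivAt f (f' t) t) (hfa : Tendsto f atTop (𝓝 a))
    (hf'l : Tendsto f' atTop (𝓝 l)) : l = 0 := by
  obtain ⟨T, hT⟩ := hf.exists_forall_of_atTop
  have hslope : ∀ t, ∃ ξ, max t T < ξ ∧ f' ξ = f (max t T + 1) - f (max t T) := by
    intro t
    obtain ⟨ξ, hξ, heq⟩ := exists_hasDerivAt_eq_slope f f' (lt_add_one (max t T))
      (fun x hx => (hT x ((le_max_right _ _).trans hx.1)).continuousAt.continuousWithinAt)
      (fun x hx => hT x ((le_max_right _ _).trans hx.1.le))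
    exact ⟨ξ, hξ.1, by rwa [add_sub_cancel_left, div_one] at heq⟩
  choose ξ hξ hξeq using hslope
  have hmax : Tendsto (fun t => max t T) atTop atTop :=
    tendsto_atTop_mono (le_max_left · T) tendsto_id
  have hξ_top : Tendsto ξ atTop atTop :=
    tendsto_atTop_mono (fun t => (le_max_left t T).trans (hξ t).le) tendsto_id
  have hdiff : Tendsto (fun t => f (max t T + 1) - f (max t T)) atTop (𝓝 (a - a)) :=
    (hfa.comp (tendsto_atTop_add_const_right _ 1 hmax)).sub (hfa.comp hmax)
  rw [sub_self] at hdiff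
  exact tendsto_nhds_unique ((hf'l.comp hξ_top).congr hξeq) hdiff

theorem le_of_hasDerivAt_nonpos_above {f f' : ℝ → ℝ} {a c : ℝ}
    (hf : ∀ t, a ≤ t → HasDerivAt f (f' t) t) (hf' : ∀ t, a ≤ t → c < f t → f' t ≤ 0)
    (ha : f a ≤ c) : ∀ t, a ≤ t → f t ≤ c := by
  intro t hat
  refine le_of_forall_pos_le_add fun ε hε => ?_
  -- fence `f` by lines of slope `k > 0` through `(a, c + k)`, then let `k → 0`
  set k := ε / (t - a + 1)
  have hk : 0 < k := div_pos hε (by linarith)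
  have hfence := image_le_of_deriv_right_lt_deriv_boundary (f := f) (f' := f')
    (B := fun x => c + k * (x - a + 1)) (B' := fun _ => k)
    (fun x hx => (hf x hx.1).continuousAt.continuousWithinAt)
    (fun x hx => (hf x hx.1).hasDerivWithinAt) (by simp; linarith)
    (fun x => by simpa using (((hasDerivAt_id x).sub_const a).add_const 1).const_mul k |>.const_add c)
    (fun x hx hfx => (hf' x hx.1 (by nlinarith [hx.1])).trans_lt hk) ⟨hat, le_rfl⟩
  have hkε : k * (t - a + 1) = ε := div_mul_cancel₀ ε (by linarith)
  simpa [hkε] using hfence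

theorem le_of_hasDerivAt_nonneg_below {f f' : ℝ → ℝ} {a c : ℝ}
    (hf : ∀ t, a ≤ t → HasDerivAt f (f' t) t) (hf' : ∀ t, a ≤ t → f t < c → 0 ≤ f' t)
    (ha : c ≤ f a) : ∀ t, a ≤ t → c ≤ f t := by
  have hneg := le_of_hasDerivAt_nonpos_above (f := -f) (f' := -f') (c := -c)
    (fun t ht => (hf t ht).neg) (fun t ht hlt => neg_nonpos.2 (hf' t ht (neg_lt_neg_iff.1 hlt)))
    (neg_le_neg ha)
  exact fun t ht => neg_le_neg_iff.1 (hneg t ht)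

section AutonomousODE

variable {F θ : ℝ → ℝ}

theorem mem_and_eq_zero_of_tendsto_of_hasDerivAt_comp {s : Set ℝ} {L : ℝ}
    (hF : ContinuousOn F s) (hs : IsClosed s)
    (hode : ∀ t, 0 ≤ t → HasDerivAt θ (F (θ t)) t) (hmem : ∀ t, 0 ≤ t → θ t ∈ s)
    (hL : Tendsto θ atTop (𝓝 L)) : L ∈ s ∧ F L = 0 := by
  have hmem' : ∀ᶠ t in atTop, θ t ∈ s := eventually_atTop.2 ⟨0, hmem⟩
  have hLs : L ∈ s := hs.mem_of_tendsto hL hmem'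
  have hFθ : Tendsto (F ∘ θ) atTop (𝓝 (F L)) :=
    (hF L hLs).tendsto.comp (tendsto_nhdsWithin_iff.2 ⟨hL, hmem'⟩)
  exact ⟨hLs, eq_zero_of_tendsto_of_tendsto_deriv (eventually_atTop.2 ⟨0, hode⟩) hL hFθ⟩

theorem tendsto_of_hasDerivAt_comp_of_sign {a b c : ℝ} (hF : ContinuousOn F (Icc a b))
    (hode : ∀ t, 0 ≤ t → HasDerivAt θ (F (θ t)) t) (hmem : ∀ t, 0 ≤ t → θ t ∈ Icc a b)
    (hθ0 : a < θ 0) (hac : a ≤ c) (hFa : F a = 0) (hFc : F c = 0)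
    (hpos : ∀ s ∈ Ioo a c, 0 < F s) (hneg : ∀ s ∈ Ioc c b, F s < 0) :
    Tendsto θ atTop (𝓝 c) := by
  have hnonneg : ∀ s ∈ Icc a c, 0 ≤ F s := by
    rintro s ⟨has, hsc⟩
    rcases has.eq_or_lt with rfl | has
    · exact hFa.ge
    rcases hsc.lt_or_eq with hsc | rfl
    exacts [(hpos s ⟨has, hsc⟩).le, hFc.ge]
  have hnonpos : ∀ s ∈ Icc c b, F s ≤ 0 := by
    rintro s ⟨hcs, hsb⟩
    rcases hcs.eq_or_lt with rfl | hcs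
    exacts [hFc.le, (hneg s ⟨hcs, hsb⟩).le]
  have hlimit : ∀ L, Tendsto θ atTop (𝓝 L) → L ∈ Icc a b ∧ F L = 0 := fun _ =>
    mem_and_eq_zero_of_tendsto_of_hasDerivAt_comp hF isClosed_Icc hode hmem
  rcases le_or_gt (θ 0) c with hθc | hcθ
  · have hle : ∀ t, 0 ≤ t → θ t ≤ c := le_of_hasDerivAt_nonpos_above hode
      (fun t ht hct => hnonpos _ ⟨hct.le, (hmem t ht).2⟩) hθc
    have hge : ∀ t, 0 ≤ t → θ 0 ≤ θ t := le_of_hasDerivAt_nonneg_below hode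
      (fun t ht hlt => hnonneg _ ⟨(hmem t ht).1, hlt.le.trans hθc⟩) le_rfl
    obtain ⟨L, hL⟩ := exists_tendsto_of_hasDerivAt_nonneg hode
      (fun t ht => hnonneg _ ⟨(hmem t ht).1, hle t ht⟩) hle
    have hLc : L ≤ c := le_of_tendsto hL (eventually_atTop.2 ⟨0, hle⟩)
    have hθL : θ 0 ≤ L := ge_of_tendsto hL (eventually_atTop.2 ⟨0, hge⟩)
    rcases hLc.lt_or_eq with hLc | rfl
    · exact absurd (hlimit L hL).2 (hpos L ⟨hθ0.trans_le hθL, hLc⟩).ne'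
    · exact hL
  · have hge : ∀ t, 0 ≤ t → c ≤ θ t := le_of_hasDerivAt_nonneg_below hode
      (fun t ht hlt => hnonneg _ ⟨(hmem t ht).1, hlt.le⟩) hcθ.le
    obtain ⟨L, hL⟩ := exists_tendsto_of_hasDerivAt_nonpos hode
      (fun t ht => hnonpos _ ⟨hge t ht, (hmem t ht).2⟩) hge
    have hcL : c ≤ L := ge_of_tendsto hL (eventually_atTop.2 ⟨0, hge⟩)
    obtain ⟨⟨-, hLb⟩, hFL⟩ := hlimit L hL
    rcases hcL.lt_or_eq with hcL | rfl
    · exact absurd hFL (hneg L ⟨hcL, hLb⟩).ne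
    · exact hL

theorem tendsto_of_hasDerivAt_self_mul {g : ℝ → ℝ} {c : ℝ} (hg : ContinuousOn g (Icc 0 1))
    (hode : ∀ t, 0 ≤ t → HasDerivAt θ (θ t * g (θ t)) t) (hmem : ∀ t, 0 ≤ t → θ t ∈ Icc 0 1)
    (hθ0 : 0 < θ 0) (hc : 0 ≤ c) (hgc : c * g c = 0) (hpos : ∀ s ∈ Ioo 0 c, 0 < g s)
    (hneg : ∀ s ∈ Ioc c 1, g s < 0) : Tendsto θ atTop (𝓝 c) :=
  tendsto_of_hasDerivAt_comp_of_sign (F := fun s => s * g s) (continuousOn_id.mul hg) hode hmem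
    hθ0 hc (zero_mul _) hgc (fun s hs => mul_pos hs.1 (hpos s hs))
    (fun s hs => mul_neg_of_pos_of_neg (hc.trans_lt hs.1) (hneg s hs))

end AutonomousODE

theorem one_sub_mul_mul_le_mul_of_antitoneOn {β : ℝ} {a : ℝ → ℝ} {s : ℝ} (hβ : 0 ≤ β)
    (hanti : AntitoneOn a (Icc 0 1)) (ha : ∀ x ∈ Icc (0:ℝ) 1, 0 ≤ a x) (hs : s ∈ Icc (0:ℝ) 1) :
    (1 - s) * β * a s ≤ β * a 0 := by
  have has : a s ≤ a 0 := hanti ⟨le_rfl, zero_le_one⟩ hs hs.1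
  have h1s : 1 - s ≤ 1 := by linarith [hs.1]
  calc (1 - s) * β * a s ≤ 1 * β * a s := by gcongr; exact ha s hs
    _ ≤ β * a 0 := by rw [one_mul]; gcongr

theorem sis_strategic_convergence_general
    (β δ M θbar aAF : ℝ) (hβ : 0 < β) (hδ : 0 < δ)
    (hθbar : θbar ∈ Set.Ioc (0:ℝ) 1)
    (astar : ℝ → ℝ)
    (hcont : ContinuousOn astar (Set.Icc 0 1))
    (hanti : AntitoneOn astar (Set.Icc 0 1))
    (hrange : ∀ s ∈ Set.Icc (0:ℝ) 1, astar s ∈ Set.Icc (0:ℝ) M)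
    (hzero : ∀ s, θbar ≤ s → astar s = 0)
    (haAF : astar 0 = aAF)
    (θ : ℝ → ℝ) (hθ0 : θ 0 ∈ Set.Ioc (0:ℝ) 1)
    (hmem : ∀ t, 0 ≤ t → θ t ∈ Set.Icc (0:ℝ) 1)
    (hode : ∀ t, 0 ≤ t → HasDerivAt θ (θ t * ((1 - θ t) * β * astar (θ t) - δ)) t) :
    (β * aAF < δ → Filter.Tendsto θ Filter.atTop (nhds 0)) ∧
    (β * aAF ≥ δ →
      StrictAntiOn (fun s => (1 - s) * β * astar s - δ) (Set.Ico 0 θbar) →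
      ∃ θd, θd ∈ Set.Ico 0 θbar ∧ (1 - θd) * β * astar θd = δ ∧
        (∀ θd' ∈ Set.Ico 0 θbar, (1 - θd') * β * astar θd' = δ → θd' = θd) ∧
        Filter.Tendsto θ Filter.atTop (nhds θd)) := by
  subst haAF
  set g : ℝ → ℝ := fun s => (1 - s) * β * astar s - δ with hg
  have hg_cont : ContinuousOn g (Icc 0 1) := by fun_prop
  have hg_le : ∀ s ∈ Icc (0:ℝ) 1, g s ≤ β * astar 0 - δ := fun s hs => by
    have := one_sub_mul_mul_le_mul_of_antitoneOn hβ.le hanti (fun x hx => (hrange x hx).1) hs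
    simp only [hg]; linarith
  have hg_tail : ∀ s, θbar ≤ s → g s = -δ := fun s hs => by simp [hg, hzero s hs]
  refine ⟨fun hlt => ?_, fun hge hg_anti => ?_⟩
  · exact tendsto_of_hasDerivAt_self_mul hg_cont hode hmem hθ0.1 le_rfl (zero_mul _)
      (fun s hs => (hs.1.trans hs.2).false.elim)
      (fun s hs => (hg_le s ⟨hs.1.le, hs.2⟩).trans_lt (by linarith))
  obtain ⟨c, ⟨hc0, hcθbar⟩, hgc⟩ : ∃ c ∈ Icc 0 θbar, g c = 0 :=
    intermediate_value_Icc' hθbar.1.le (hg_cont.mono (Icc_subset_Icc_right hθbar.2))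
      ⟨by linarith [hg_tail θbar le_rfl], by simp [hg]; linarith⟩
  have hc : c ∈ Ico 0 θbar :=
    ⟨hc0, hcθbar.lt_of_ne (by rintro rfl; linarith [hg_tail c le_rfl])⟩
  have hpos : ∀ s ∈ Ioo 0 c, 0 < g s := fun s hs =>
    hgc ▸ hg_anti ⟨hs.1.le, hs.2.trans hc.2⟩ hc hs.2
  have hneg : ∀ s ∈ Ioc c 1, g s < 0 := by
    intro s hs
    rcases lt_or_ge s θbar with hsθ | hθs
    · exact hgc ▸ hg_anti hc ⟨hc0.trans hs.1.le, hsθ⟩ hs.1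
    · linarith [hg_tail s hθs]
  refine ⟨c, hc, sub_eq_zero.1 hgc, fun c' hc' hgc' => ?_, ?_⟩
  · exact hg_anti.injOn hc' hc ((sub_eq_zero.2 hgc').trans hgc.symm)
  · exact tendsto_of_hasDerivAt_self_mul hg_cont hode hmem hθ0.1 hc0 (by rw [hgc, mul_zero])
      hpos hneg

/-- SIS dynamics with strategic users choosing the best-response participation
level `a*(θ)`: if `β a^AF < δ` the infection dies out; if `β a^AF ≥ δ` (and the drift is
strictly decreasing below the threshold `θ̄`) the state converges to the unique
root `θ†` of `(1-θ)βa*(θ) = δ`. -/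
theorem sis_strategic_convergence
    (β δ M θbar aAF : ℝ) (hβ : 0 < β) (hδ : 0 < δ) (hM : 0 < M)
    (hθbar : θbar ∈ Set.Ioc (0:ℝ) 1)
    (astar : ℝ → ℝ)
    (hcont : ContinuousOn astar (Set.Icc 0 1))
    (hanti : AntitoneOn astar (Set.Icc 0 1))
    (hrange : ∀ s ∈ Set.Icc (0:ℝ) 1, astar s ∈ Set.Icc (0:ℝ) M)
    (hzero : ∀ s, θbar ≤ s → astar s = 0)
    (haAF : astar 0 = aAF) (haAFpos : 0 < aAF)
    (θ : ℝ → ℝ) (hθ0 : θ 0 ∈ Set.Ioc (0:ℝ) 1)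
    (hmem : ∀ t, 0 ≤ t → θ t ∈ Set.Icc (0:ℝ) 1)
    (hode : ∀ t, 0 ≤ t → HasDerivAt θ (θ t * ((1 - θ t) * β * astar (θ t) - δ)) t) :
    (β * aAF < δ → Filter.Tendsto θ Filter.atTop (nhds 0)) ∧
    (β * aAF ≥ δ →
      StrictAntiOn (fun s => (1 - s) * β * astar s - δ) (Set.Ico 0 θbar) →
      ∃ θd, θd ∈ Set.Ico 0 θbar ∧ (1 - θd) * β * astar θd = δ ∧
        (∀ θd' ∈ Set.Ico 0 θbar, (1 - θd') * β * astar θd' = δ → θd' = θd) ∧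
        Filter.Tendsto θ Filter.atTop (nhds θd)) :=
  sis_strategic_convergence_general β δ M θbar aAF hβ hδ hθbar astar hcont hanti hrange hzero haAF θ
    hθ0 hmem hode
end

section
/- Let K ≥ 1, weights w_k > 0 with Σ_k w_k = 1, and participation levels a_k > 0. If τ Σ_k w_k a_k > 1 where τ > 0, then the equation Σ_{k=1}^K (τ w_k a_k)/(τ θ a_k + 1) = 1 has a unique solution θ ∈ (0,1). -/
/-!
With `b k = τ a k`, the left-hand side is `θ ↦ ∑ k, w k b k / (b k θ + 1)`, which is continuous and
strictly decreasing on `[0, ∞)`. At `θ = 0` it equals `τ ∑ k, w k a k > 1`, and at `θ = 1` each term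
`w k b k / (b k + 1)` is below `w k`, so the value is below `∑ k, w k = 1`. The intermediate value
theorem gives a root in `(0, 1)`, and strict monotonicity makes it unique.
-/

open Set Finset

theorem existsUnique_mem_Ioo_of_strictAntiOn {α δ : Type*} [ConditionallyCompleteLinearOrder α]
    [TopologicalSpace α] [OrderTopology α] [DenselyOrdered α] [LinearOrder δ] [TopologicalSpace δ]
    [OrderClosedTopology δ] {f : α → δ} {a b : α} {y : δ} (hab : a ≤ b)
    (hf : ContinuousOn f (Icc a b)) (hanti : StrictAntiOn f (Icc a b)) (hy : y ∈ Ioo (f b) (f a)) :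
    ∃! x, x ∈ Ioo a b ∧ f x = y := by
  obtain ⟨x, hx, rfl⟩ := intermediate_value_Ioo' hab hf hy
  exact ⟨x, ⟨hx, rfl⟩, fun x' ⟨hx', hfx'⟩ =>
    hanti.injOn (Ioo_subset_Icc_self hx') (Ioo_subset_Icc_self hx) hfx'⟩

section SteadyStateSum

variable {ι : Type*} [Fintype ι] (w b : ι → ℝ)

noncomputable def steadyStateSum (θ : ℝ) : ℝ :=
  ∑ k, w k * b k / (b k * θ + 1)

lemma steadyStateSum_zero : steadyStateSum w b 0 = ∑ k, w k * b k := by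
  simp [steadyStateSum]

variable {w b}

lemma continuousOn_steadyStateSum (hb : ∀ k, 0 ≤ b k) :
    ContinuousOn (steadyStateSum w b) (Ici 0) := by
  refine continuousOn_finsetSum _ fun k _ => continuousOn_const.div (by fun_prop) ?_
  intro θ (hθ : 0 ≤ θ)
  have := mul_nonneg (hb k) hθ
  positivity

lemma steadyStateSum_strictAntiOn [Nonempty ι] (hw : ∀ k, 0 < w k) (hb : ∀ k, 0 < b k) :
    StrictAntiOn (steadyStateSum w b) (Ici 0) := by
  intro x (hx : 0 ≤ x) y _ hxy
  refine sum_lt_sum_of_nonempty univ_nonempty fun k _ => ?_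
  have := mul_nonneg (hb k).le hx
  gcongr
  · exact mul_pos (hw k) (hb k)
  · exact hb k

lemma steadyStateSum_one_lt_sum [Nonempty ι] (hw : ∀ k, 0 < w k) (hb : ∀ k, 0 ≤ b k) :
    steadyStateSum w b 1 < ∑ k, w k := by
  refine sum_lt_sum_of_nonempty univ_nonempty fun k _ => ?_
  have := hb k
  rw [mul_one, div_lt_iff₀ (by positivity)]
  nlinarith [hw k]

end SteadyStateSum

theorem nonzero_steady_state_unique_general
    (K : ℕ) (w a : Fin K → ℝ) (τ : ℝ)
    (hw : ∀ k, 0 < w k) (hws : ∑ k, w k = 1) (ha : ∀ k, 0 < a k) (hτ : 0 < τ)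
    (hbig : τ * ∑ k, w k * a k > 1) :
    ∃! θ : ℝ, θ ∈ Set.Ioo (0:ℝ) 1 ∧ ∑ k, (τ * w k * a k) / (τ * θ * a k + 1) = 1 := by
  have : Nonempty (Fin K) := by
    by_contra hK
    simp [not_nonempty_iff.mp hK] at hws
  have hb : ∀ k, 0 < τ * a k := fun k => mul_pos hτ (ha k)
  have hsum : ∀ θ, ∑ k, (τ * w k * a k) / (τ * θ * a k + 1) =
      steadyStateSum w (fun k => τ * a k) θ := fun θ => by
    simp only [steadyStateSum]
    congr! 2 <;> ring
  simp only [hsum]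
  refine existsUnique_mem_Ioo_of_strictAntiOn zero_le_one
    ((continuousOn_steadyStateSum fun k => (hb k).le).mono Icc_subset_Ici_self)
    ((steadyStateSum_strictAntiOn hw hb).mono Icc_subset_Ici_self) ⟨?_, ?_⟩
  · simpa [hws] using steadyStateSum_one_lt_sum hw fun k => (hb k).le
  · refine hbig.trans_eq ?_
    rw [steadyStateSum_zero, mul_sum]
    congr! 1; ring

/-- if `τ Σ w_k a_k > 1`, the steady-state equation
`Σ_k (τ w_k a_k)/(τ θ a_k + 1) = 1` has a unique solution `θ ∈ (0,1)`. -/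
theorem nonzero_steady_state_unique
    (K : ℕ) (hK : 1 ≤ K) (w a : Fin K → ℝ) (τ : ℝ)
    (hw : ∀ k, 0 < w k) (hws : ∑ k, w k = 1) (ha : ∀ k, 0 < a k) (hτ : 0 < τ)
    (hbig : τ * ∑ k, w k * a k > 1) :
    ∃! θ : ℝ, θ ∈ Set.Ioo (0:ℝ) 1 ∧ ∑ k, (τ * w k * a k) / (τ * θ * a k + 1) = 1 :=
  nonzero_steady_state_unique_general K w a τ hw hws ha hτ hbig
end

section
/- Let K ≥ 1, w_k > 0 with Σ_k w_k = 1, a_k > 0, τ > 0. If τ ≤ 1/(Σ_k w_k a_k), then the only solution (θ, θ₁, ..., θ_K) ∈ [0,1]^{K+1} of the steady-state system θ_k = τθa_k/(τθa_k + 1) for all k and θ = Σ_k w_k θ_k is θ = θ₁ = ... = θ_K = 0. -/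
/-!
With `x_k = τ θ a_k ≥ 0`, each steady-state equation reads `θ_k = x_k / (x_k + 1) ≤ x_k`, so
`θ = ∑ w_k θ_k ≤ ∑ w_k x_k = θ · τ ∑ w_k a_k ≤ θ`. Equality must therefore hold termwise, i.e.
`x_k / (x_k + 1) = x_k`, which forces `x_k = 0` and hence `θ_k = 0` for every `k`, and then `θ = 0`.
-/

section OrderedField

variable {α : Type*} [Field α] [LinearOrder α] [IsStrictOrderedRing α] {x : α}

theorem div_add_one_le_self (hx : 0 ≤ x) : x / (x + 1) ≤ x :=
  div_le_self hx (le_add_of_nonneg_left hx)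

theorem div_add_one_eq_self_iff (hx : 0 ≤ x) : x / (x + 1) = x ↔ x = 0 := by
  refine ⟨fun h => ?_, fun h => by simp [h]⟩
  rw [div_eq_iff (by positivity)] at h
  nlinarith

theorem mul_le_one_of_le_one_div {τ S : α} (hτ : 0 ≤ τ) (h : τ ≤ 1 / S) : τ * S ≤ 1 := by
  rcases le_or_gt S 0 with hS | hS
  · nlinarith
  · rwa [le_div_iff₀ hS] at h

theorem Finset.eq_of_weighted_sum_le_of_le {ι : Type*} {s : Finset ι} {w f g : ι → α}
    (hw : ∀ i ∈ s, 0 < w i) (hfg : ∀ i ∈ s, f i ≤ g i)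
    (hsum : ∑ i ∈ s, w i * g i ≤ ∑ i ∈ s, w i * f i) : ∀ i ∈ s, f i = g i := by
  have hle : ∀ i ∈ s, w i * f i ≤ w i * g i := fun i hi =>
    mul_le_mul_of_nonneg_left (hfg i hi) (hw i hi).le
  have hterm := (Finset.sum_eq_sum_iff_of_le hle).1 (le_antisymm (Finset.sum_le_sum hle) hsum)
  exact fun i hi => mul_left_cancel₀ (hw i hi).ne' (hterm i hi)

end OrderedField

theorem subcritical_steady_state_zero_general
    (K : ℕ) (w a : Fin K → ℝ) (τ : ℝ)
    (hw : ∀ k, 0 < w k) (ha : ∀ k, 0 < a k) (hτ : 0 < τ)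
    (hsmall : τ ≤ 1 / ∑ k, w k * a k)
    (θ : ℝ) (θk : Fin K → ℝ)
    (hθ : θ ∈ Set.Icc (0:ℝ) 1)
    (heq : ∀ k, θk k = τ * θ * a k / (τ * θ * a k + 1))
    (hsum : θ = ∑ k, w k * θk k) :
    θ = 0 ∧ ∀ k, θk k = 0 := by
  set x : Fin K → ℝ := fun k => τ * θ * a k
  have hx : ∀ k, 0 ≤ x k := fun k => by have := hθ.1; have := ha k; positivity
  have hθk_le : ∀ k ∈ Finset.univ, θk k ≤ x k := fun k _ => heq k ▸ div_add_one_le_self (hx k)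
  have hsum_le : ∑ k, w k * x k ≤ ∑ k, w k * θk k :=
    calc ∑ k, w k * x k = θ * (τ * ∑ k, w k * a k) := by
          simp only [x, Finset.mul_sum]; exact Finset.sum_congr rfl fun k _ => by ring
      _ ≤ θ := mul_le_of_le_one_right hθ.1 (mul_le_one_of_le_one_div hτ.le hsmall)
      _ = ∑ k, w k * θk k := hsum
  have hθk_eq := Finset.eq_of_weighted_sum_le_of_le (fun k _ => hw k) hθk_le hsum_le
  have hθk : ∀ k, θk k = 0 := fun k => by
    have hxk : x k = 0 :=
      (div_add_one_eq_self_iff (hx k)).1 ((heq k).symm.trans (hθk_eq k (Finset.mem_univ k)))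
    rw [hθk_eq k (Finset.mem_univ k), hxk]
  exact ⟨by simp [hsum, hθk], hθk⟩

/-- if `τ ≤ 1/(Σ w_k a_k)`, the only steady state of the multi-type SIS
system is the zero state. -/
theorem subcritical_steady_state_zero
    (K : ℕ) (hK : 1 ≤ K) (w a : Fin K → ℝ) (τ : ℝ)
    (hw : ∀ k, 0 < w k) (hws : ∑ k, w k = 1) (ha : ∀ k, 0 < a k) (hτ : 0 < τ)
    (hsmall : τ ≤ 1 / ∑ k, w k * a k)
    (θ : ℝ) (θk : Fin K → ℝ)
    (hθ : θ ∈ Set.Icc (0:ℝ) 1) (hθk : ∀ k, θk k ∈ Set.Icc (0:ℝ) 1)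
    (heq : ∀ k, θk k = τ * θ * a k / (τ * θ * a k + 1))
    (hsum : θ = ∑ k, w k * θk k) :
    θ = 0 ∧ ∀ k, θk k = 0 :=
  subcritical_steady_state_zero_general K w a τ hw ha hτ hsmall θ θk hθ heq hsum
end

section
/- Let K ≥ 1 and for each k let a_k: [0,1] → (0, M] be continuous and nonincreasing with a_k(0) = a_k^AF > 0, and let w_k > 0, Σ_k w_k = 1, τ > 0. Define F(θ) = Σ_k (τ w_k a_k(θ))/(τ θ a_k(θ) + 1). If τ > 1/(Σ_k w_k a_k^AF), then F(0) > 1, F(1) < 1, F is strictly decreasing, and hence there exists a unique θ^∞ ∈ (0,1) with F(θ^∞) = 1. -/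
/-!
Dividing numerator and denominator by `a_k(θ) > 0`, the `k`-th summand of `F` is
`τ w_k / (τ θ + 1 / a_k(θ))`; its denominator is strictly increasing because `a_k` is positive
and nonincreasing, so `F` is strictly decreasing. At `θ = 0` the summands add up to
`τ Σ w_k a_k^AF > 1`, and at `θ = 1` each summand `w_k · τ a_k / (τ a_k + 1)` is below `w_k`,
so `F(1) < Σ w_k = 1`. The intermediate value theorem gives a root of `F = 1` in `(0, 1)`,
and strict monotonicity makes it unique.
-/

open Finset Set

theorem StrictAntiOn.existsUnique_mem_Ioo_eq {f : ℝ → ℝ} {a b y : ℝ} (hab : a ≤ b)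
    (hcont : ContinuousOn f (Icc a b)) (hanti : StrictAntiOn f (Icc a b))
    (hb : f b < y) (ha : y < f a) : ∃! s, s ∈ Ioo a b ∧ f s = y := by
  obtain ⟨s, hs, hfs⟩ := intermediate_value_Ioo' hab hcont ⟨hb, ha⟩
  refine ⟨s, ⟨hs, hfs⟩, fun t ⟨ht, hft⟩ => ?_⟩
  exact hanti.injOn (Ioo_subset_Icc_self ht) (Ioo_subset_Icc_self hs) (hft.trans hfs.symm)

namespace Participation

variable {ι : Type*} [Fintype ι] {τ : ℝ} {w : ι → ℝ} {a : ι → ℝ → ℝ}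

noncomputable def aggregate (τ : ℝ) (w : ι → ℝ) (a : ι → ℝ → ℝ) (s : ℝ) : ℝ :=
  ∑ k, τ * w k * a k s / (τ * s * a k s + 1)

lemma summand_eq_div_add_inv {c x : ℝ} (τ s : ℝ) (hx : x ≠ 0) :
    τ * c * x / (τ * s * x + 1) = τ * c / (τ * s + x⁻¹) := by
  field_simp

lemma summand_lt {c x : ℝ} (hτ : 0 < τ) (hc : 0 < c) (hx : 0 < x) :
    τ * c * x / (τ * 1 * x + 1) < c := by
  rw [div_lt_iff₀ (by positivity)]
  nlinarith

lemma summand_strictAntiOn {c : ℝ} {g : ℝ → ℝ} (hτ : 0 < τ) (hc : 0 < c)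
    (hg : AntitoneOn g (Icc 0 1)) (hg_pos : ∀ s ∈ Icc (0 : ℝ) 1, 0 < g s) :
    StrictAntiOn (fun s => τ * c * g s / (τ * s * g s + 1)) (Icc 0 1) := by
  intro s hs t ht hst
  have := hs.1
  have hgs := hg_pos s hs
  have hgt := hg_pos t ht
  have hden : τ * s + (g s)⁻¹ < τ * t + (g t)⁻¹ :=
    add_lt_add_of_lt_of_le (by gcongr) (inv_anti₀ hgt (hg hs ht hst.le))
  simp only [summand_eq_div_add_inv τ _ hgs.ne', summand_eq_div_add_inv τ _ hgt.ne']
  exact div_lt_div_of_pos_left (by positivity) (by positivity) hden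

lemma aggregate_zero : aggregate τ w a 0 = τ * ∑ k, w k * a k 0 := by
  simp only [aggregate, mul_sum, mul_zero, zero_mul, zero_add, div_one, mul_assoc]

lemma aggregate_one_lt [Nonempty ι] (hτ : 0 < τ) (hw : ∀ k, 0 < w k)
    (ha : ∀ k, ∀ s ∈ Icc (0 : ℝ) 1, 0 < a k s) : aggregate τ w a 1 < ∑ k, w k :=
  sum_lt_sum_of_nonempty univ_nonempty fun k _ =>
    summand_lt hτ (hw k) (ha k 1 (right_mem_Icc.2 zero_le_one))

lemma aggregate_strictAntiOn [Nonempty ι] (hτ : 0 < τ) (hw : ∀ k, 0 < w k)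
    (ha : ∀ k, ∀ s ∈ Icc (0 : ℝ) 1, 0 < a k s) (hanti : ∀ k, AntitoneOn (a k) (Icc 0 1)) :
    StrictAntiOn (aggregate τ w a) (Icc 0 1) := fun _ hs _ ht hst =>
  sum_lt_sum_of_nonempty univ_nonempty fun k _ =>
    summand_strictAntiOn hτ (hw k) (hanti k) (ha k) hs ht hst

lemma aggregate_continuousOn (hτ : 0 < τ) (ha : ∀ k, ∀ s ∈ Icc (0 : ℝ) 1, 0 < a k s)
    (hcont : ∀ k, ContinuousOn (a k) (Icc 0 1)) :
    ContinuousOn (aggregate τ w a) (Icc 0 1) := by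
  refine continuousOn_finsetSum _ fun k _ => ContinuousOn.div (by fun_prop) (by fun_prop) ?_
  intro s hs
  have := hs.1
  have := ha k s hs
  exact (by positivity : 0 < τ * s * a k s + 1).ne'

end Participation

open Participation in
theorem supercritical_equilibrium_fixed_point_general
    (K : ℕ) (hK : 1 ≤ K) (M τ : ℝ) (hτ : 0 < τ)
    (w aAF : Fin K → ℝ) (a : Fin K → ℝ → ℝ)
    (hw : ∀ k, 0 < w k) (hws : ∑ k, w k = 1)
    (hcont : ∀ k, ContinuousOn (a k) (Set.Icc 0 1))
    (hanti : ∀ k, AntitoneOn (a k) (Set.Icc 0 1))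
    (hrange : ∀ k, ∀ s ∈ Set.Icc (0:ℝ) 1, a k s ∈ Set.Ioc (0:ℝ) M)
    (h0 : ∀ k, a k 0 = aAF k)
    (F : ℝ → ℝ)
    (hF : ∀ s, F s = ∑ k, (τ * w k * a k s) / (τ * s * a k s + 1))
    (hbig : τ > 1 / ∑ k, w k * aAF k) :
    F 0 > 1 ∧ F 1 < 1 ∧ StrictAntiOn F (Set.Icc 0 1) ∧
      ∃! s : ℝ, s ∈ Set.Ioo (0:ℝ) 1 ∧ F s = 1 := by
  have : Nonempty (Fin K) := ⟨⟨0, hK⟩⟩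
  obtain rfl : F = aggregate τ w a := funext hF
  have ha : ∀ k, ∀ s ∈ Icc (0 : ℝ) 1, 0 < a k s := fun k s hs => (hrange k s hs).1
  simp only [← h0] at hbig
  have hS : 0 < ∑ k, w k * a k 0 :=
    sum_pos (fun k _ => mul_pos (hw k) (ha k 0 (left_mem_Icc.2 zero_le_one))) univ_nonempty
  have hF0 : aggregate τ w a 0 > 1 := by
    rw [aggregate_zero]
    exact (div_lt_iff₀ hS).1 hbig
  have hF1 : aggregate τ w a 1 < 1 := hws ▸ aggregate_one_lt hτ hw ha
  have hmono := aggregate_strictAntiOn hτ hw ha hanti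
  exact ⟨hF0, hF1, hmono, hmono.existsUnique_mem_Ioo_eq zero_le_one
    (aggregate_continuousOn hτ ha hcont) hF1 hF0⟩

/-- supercritical equilibrium fixed point for the heterogeneous participation
game: `F(0) > 1`, `F(1) < 1`, `F` strictly decreasing, hence a unique `θ^∞ ∈ (0,1)` with
`F(θ^∞) = 1`. -/
theorem supercritical_equilibrium_fixed_point
    (K : ℕ) (hK : 1 ≤ K) (M τ : ℝ) (hM : 0 < M) (hτ : 0 < τ)
    (w aAF : Fin K → ℝ) (a : Fin K → ℝ → ℝ)
    (hw : ∀ k, 0 < w k) (hws : ∑ k, w k = 1)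
    (hcont : ∀ k, ContinuousOn (a k) (Set.Icc 0 1))
    (hanti : ∀ k, AntitoneOn (a k) (Set.Icc 0 1))
    (hrange : ∀ k, ∀ s ∈ Set.Icc (0:ℝ) 1, a k s ∈ Set.Ioc (0:ℝ) M)
    (h0 : ∀ k, a k 0 = aAF k) (hAFpos : ∀ k, 0 < aAF k)
    (F : ℝ → ℝ)
    (hF : ∀ s, F s = ∑ k, (τ * w k * a k s) / (τ * s * a k s + 1))
    (hbig : τ > 1 / ∑ k, w k * aAF k) :
    F 0 > 1 ∧ F 1 < 1 ∧ StrictAntiOn F (Set.Icc 0 1) ∧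
      ∃! s : ℝ, s ∈ Set.Ioo (0:ℝ) 1 ∧ F s = 1 :=
  supercritical_equilibrium_fixed_point_general K hK M τ hτ w aAF a hw hws hcont hanti hrange h0 F
    hF hbig
end

section
/- Under the hypotheses of the previous statement, if instead τ ≤ 1/(Σ_k w_k a_k^AF), then θ = 0 is the unique fixed point in [0,1) of the equilibrium condition: θ = 0 or F(θ) = 1, i.e., there is no θ ∈ (0,1) with F(θ) = 1. -/
/-!
For `θ > 0` each summand of `F` is strictly smaller than its value with the denominator
dropped, `τ w_k a_k(θ)`, and by monotonicity `a_k(θ) ≤ a_k(0)`; summing gives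
`F(θ) < τ Σ_k w_k a_k^AF ≤ 1`, so `F(θ) = 1` is impossible.
-/

lemma div_mul_add_one_lt_mul {τ θ w x x₀ : ℝ} (hτ : 0 < τ) (hθ : 0 < θ) (hw : 0 < w)
    (hx : 0 < x) (hxx₀ : x ≤ x₀) :
    τ * w * x / (τ * θ * x + 1) < τ * (w * x₀) :=
  calc τ * w * x / (τ * θ * x + 1)
      < τ * w * x := div_lt_self (by positivity) (by linarith [mul_pos (mul_pos hτ hθ) hx])
    _ ≤ τ * (w * x₀) := by rw [← mul_assoc]; gcongr

lemma sum_div_mul_add_one_lt_one {ι : Type*} [Fintype ι] [Nonempty ι] {τ θ : ℝ}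
    {w x x₀ : ι → ℝ} (hτ : 0 < τ) (hθ : 0 < θ) (hw : ∀ k, 0 < w k) (hx : ∀ k, 0 < x k)
    (hxx₀ : ∀ k, x k ≤ x₀ k) (hsub : τ * ∑ k, w k * x₀ k ≤ 1) :
    ∑ k, τ * w k * x k / (τ * θ * x k + 1) < 1 :=
  calc ∑ k, τ * w k * x k / (τ * θ * x k + 1)
      < ∑ k, τ * (w k * x₀ k) :=
        Finset.sum_lt_sum_of_nonempty Finset.univ_nonempty fun k _ =>
          div_mul_add_one_lt_mul hτ hθ (hw k) (hx k) (hxx₀ k)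
    _ = τ * ∑ k, w k * x₀ k := (Finset.mul_sum _ _ _).symm
    _ ≤ 1 := hsub

theorem subcritical_equilibrium_unique_zero_general
    (K : ℕ) (hK : 1 ≤ K) (M τ : ℝ) (hτ : 0 < τ)
    (w aAF : Fin K → ℝ) (a : Fin K → ℝ → ℝ)
    (hw : ∀ k, 0 < w k)
    (hanti : ∀ k, AntitoneOn (a k) (Set.Icc 0 1))
    (hrange : ∀ k, ∀ s ∈ Set.Icc (0:ℝ) 1, a k s ∈ Set.Ioc (0:ℝ) M)
    (h0 : ∀ k, a k 0 = aAF k) (hAFpos : ∀ k, 0 < aAF k)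
    (F : ℝ → ℝ)
    (hF : ∀ s, F s = ∑ k, (τ * w k * a k s) / (τ * s * a k s + 1))
    (hsmall : τ ≤ 1 / ∑ k, w k * aAF k) :
    ∀ s ∈ Set.Ico (0:ℝ) 1, (s = 0 ∨ F s = 1) → s = 0 := by
  rintro s ⟨hs0, hs1⟩ (rfl | hFs)
  · rfl
  have : Nonempty (Fin K) := ⟨⟨0, hK⟩⟩
  have hS : 0 < ∑ k, w k * aAF k :=
    Finset.sum_pos (fun k _ => mul_pos (hw k) (hAFpos k)) Finset.univ_nonempty
  have hsIcc : s ∈ Set.Icc (0:ℝ) 1 := ⟨hs0, hs1.le⟩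
  by_contra hs
  have hlt : F s < 1 := by
    rw [hF]
    refine sum_div_mul_add_one_lt_one hτ (lt_of_le_of_ne hs0 (Ne.symm hs))
      hw (fun k => (hrange k s hsIcc).1) (fun k => ?_) ((le_div_iff₀ hS).1 hsmall)
    simpa only [h0] using hanti k (Set.left_mem_Icc.2 zero_le_one) hsIcc hs0
  exact hlt.ne hFs

/-- in the subcritical case `τ ≤ 1/(Σ w_k a_k^AF)`, `θ = 0` is the unique
equilibrium fixed point in `[0,1)`: no `θ ∈ (0,1)` satisfies `F(θ) = 1`. -/
theorem subcritical_equilibrium_unique_zero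
    (K : ℕ) (hK : 1 ≤ K) (M τ : ℝ) (hM : 0 < M) (hτ : 0 < τ)
    (w aAF : Fin K → ℝ) (a : Fin K → ℝ → ℝ)
    (hw : ∀ k, 0 < w k) (hws : ∑ k, w k = 1)
    (hcont : ∀ k, ContinuousOn (a k) (Set.Icc 0 1))
    (hanti : ∀ k, AntitoneOn (a k) (Set.Icc 0 1))
    (hrange : ∀ k, ∀ s ∈ Set.Icc (0:ℝ) 1, a k s ∈ Set.Ioc (0:ℝ) M)
    (h0 : ∀ k, a k 0 = aAF k) (hAFpos : ∀ k, 0 < aAF k)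
    (F : ℝ → ℝ)
    (hF : ∀ s, F s = ∑ k, (τ * w k * a k s) / (τ * s * a k s + 1))
    (hsmall : τ ≤ 1 / ∑ k, w k * aAF k) :
    ∀ s ∈ Set.Ico (0:ℝ) 1, (s = 0 ∨ F s = 1) → s = 0 :=
  subcritical_equilibrium_unique_zero_general K hK M τ hτ w aAF a hw hanti hrange h0 hAFpos F hF
    hsmall
end

section
/- Let A: [0, ∞) → [0, ∞) be continuous and strictly increasing with A(0) = 0 (the aggregate attack-free participation level as a function of the reward r₀), let b₀ > 0 and τ > 0, and define the effective participation G(r₀) for the equilibrium as: G(r₀) = A(r₀) if A(r₀) ≤ 1/τ, and G(r₀) = 1/τ if A(r₀) > 1/τ. Then max over r₀ ∈ [0, b₀] of (b₀ - r₀)G(r₀) equals max over {r₀ ∈ [0, b₀] : A(r₀) ≤ 1/τ} of (b₀ - r₀)A(r₀). -/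
/-!
Capping `A` at `1/τ` never helps the operator: if `A r > 1/τ`, the intermediate value theorem
gives a smaller reward `r' ≤ r` with `A r' = 1/τ` exactly, which earns the same capped
participation at a lower cost. So every value of the capped problem is dominated by a value of the
constrained one, and conversely the two objectives agree wherever `A ≤ 1/τ`.
-/

open Set

theorem exists_mem_Icc_le_and_mul_min_le {A : ℝ → ℝ} {b c r : ℝ}
    (hA : ContinuousOn A (Ici 0)) (hc : 0 ≤ c) (hA0 : A 0 ≤ c) (hr : r ∈ Icc 0 b) :
    ∃ r' ∈ Icc 0 b, A r' ≤ c ∧ (b - r) * min (A r) c ≤ (b - r') * A r' := by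
  rcases le_total (A r) c with hAr | hcAr
  · exact ⟨r, hr, hAr, by rw [min_eq_left hAr]⟩
  · obtain ⟨r', ⟨hr'0, hr'r⟩, hAr'⟩ :=
      intermediate_value_Icc hr.1 (hA.mono fun x hx => hx.1) ⟨hA0, hcAr⟩
    refine ⟨r', ⟨hr'0, hr'r.trans hr.2⟩, hAr'.le, ?_⟩
    rw [min_eq_right hcAr, hAr']
    exact mul_le_mul_of_nonneg_right (by linarith) hc

theorem less_is_more_equivalence_general
    (b₀ τ : ℝ) (hτ : 0 < τ)
    (A G : ℝ → ℝ)
    (hAc : ContinuousOn A (Set.Ici 0))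
    (hA0 : A 0 = 0)
    (hG : ∀ r, G r = if A r ≤ 1 / τ then A r else 1 / τ) :
    sSup ((fun r => (b₀ - r) * G r) '' Set.Icc 0 b₀) =
      sSup ((fun r => (b₀ - r) * A r) '' {r | r ∈ Set.Icc (0:ℝ) b₀ ∧ A r ≤ 1 / τ}) := by
  have hcap : 0 ≤ 1 / τ := by positivity
  obtain rfl : G = fun r => min (A r) (1 / τ) := funext fun r => (hG r).trans (min_def _ _).symm
  apply csSup_eq_csSup_of_forall_exists_le
  · rintro _ ⟨r, hr, rfl⟩
    obtain ⟨r', hr', hAr', hle⟩ :=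
      exists_mem_Icc_le_and_mul_min_le hAc hcap (hA0.trans_le hcap) hr
    exact ⟨_, ⟨r', ⟨hr', hAr'⟩, rfl⟩, hle⟩
  · rintro _ ⟨r, ⟨hr, hAr⟩, rfl⟩
    exact ⟨_, ⟨r, hr, rfl⟩, by dsimp only; rw [min_eq_left hAr]⟩

/-- "less is more", Theorem 2: the operator's problem with the capped
effective participation `G = min(A, 1/τ)` is equivalent to the attack-free problem with
the added constraint `A(r₀) ≤ 1/τ`. -/
theorem less_is_more_equivalence
    (b₀ τ : ℝ) (hb : 0 < b₀) (hτ : 0 < τ)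
    (A G : ℝ → ℝ)
    (hAc : ContinuousOn A (Set.Ici 0))
    (hAm : StrictMonoOn A (Set.Ici 0))
    (hA0 : A 0 = 0)
    (hAnn : ∀ r, 0 ≤ r → 0 ≤ A r)
    (hG : ∀ r, G r = if A r ≤ 1 / τ then A r else 1 / τ) :
    sSup ((fun r => (b₀ - r) * G r) '' Set.Icc 0 b₀) =
      sSup ((fun r => (b₀ - r) * A r) '' {r | r ∈ Set.Icc (0:ℝ) b₀ ∧ A r ≤ 1 / τ}) :=
  less_is_more_equivalence_general b₀ τ hτ A G hAc hA0 hG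
end

section
/- In the setting of the previous statement, any maximizer r* of (b₀ - r₀)G(r₀) over [0, b₀] satisfies r* ≤ r^AF*, where r^AF* is the largest maximizer of (b₀ - r₀)A(r₀) over [0, b₀] (the attack-free optimal reward). -/
/-!
Write `c = 1 / τ`, so that `G = min A c`. If some maximizer `r⋆` of `(b₀ - r) G(r)` exceeded `r^AF`,
then `A(r⋆) ≤ c`: otherwise, by the intermediate value theorem, some `r' ∈ [r^AF, r⋆)` already
reaches the cap, and `(b₀ - r') c > (b₀ - r⋆) c`. Below the cap `G = A` on `[r^AF, r⋆]`, so
`r⋆` is also a maximizer of `(b₀ - r) A(r)`, contradicting the choice of `r^AF` as the largest one.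
-/

open Set

theorem exists_mem_Ico_le_of_lt_right {α δ : Type*} [ConditionallyCompleteLinearOrder α]
    [TopologicalSpace α] [OrderTopology α] [DenselyOrdered α]
    [LinearOrder δ] [TopologicalSpace δ] [OrderClosedTopology δ]
    {f : α → δ} {a b : α} {c : δ} (hab : a < b) (hf : ContinuousOn f (Icc a b)) (hc : c < f b) :
    ∃ x ∈ Ico a b, c ≤ f x := by
  rcases le_or_gt c (f a) with hca | hac
  · exact ⟨a, left_mem_Ico.2 hab, hca⟩
  · obtain ⟨x, hx, hfx⟩ := intermediate_value_Ioo hab.le hf ⟨hac, hc⟩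
    exact ⟨x, Ioo_subset_Ico_self hx, hfx.ge⟩

section CappedObjective

variable {A : ℝ → ℝ} {S : Set ℝ} {b c r₀ r : ℝ}

theorem le_of_isMaxOn_mul_min [S.OrdConnected] (hc : 0 < c) (hA : ContinuousOn A S)
    (hr₀ : r₀ ∈ S) (hr : r ∈ S) (hlt : r₀ < r)
    (hmax : IsMaxOn (fun x => (b - x) * min (A x) c) S r) : A r ≤ c := by
  by_contra! hcr
  have hIcc : Icc r₀ r ⊆ S := Set.Icc_subset S hr₀ hr
  obtain ⟨x, hx, hcx⟩ := exists_mem_Ico_le_of_lt_right hlt (hA.mono hIcc) hcr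
  have hle := isMaxOn_iff.1 hmax x (hIcc (Ico_subset_Icc_self hx))
  rw [min_eq_right hcx, min_eq_right hcr.le] at hle
  nlinarith [hx.2]

theorem isMaxOn_mul_of_isMaxOn_mul_min (hA : MonotoneOn A S) (hr₀ : r₀ ∈ S) (hr : r ∈ S)
    (hle : r₀ ≤ r) (hAr : A r ≤ c)
    (hmax : IsMaxOn (fun x => (b - x) * min (A x) c) S r)
    (hmax₀ : IsMaxOn (fun x => (b - x) * A x) S r₀) :
    IsMaxOn (fun x => (b - x) * A x) S r :=
  isMaxOn_iff.2 fun x hx =>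
    calc (b - x) * A x
        ≤ (b - r₀) * A r₀ := isMaxOn_iff.1 hmax₀ x hx
      _ = (b - r₀) * min (A r₀) c := by rw [min_eq_left ((hA hr₀ hr hle).trans hAr)]
      _ ≤ (b - r) * min (A r) c := isMaxOn_iff.1 hmax r₀ hr₀
      _ = (b - r) * A r := by rw [min_eq_left hAr]

end CappedObjective

theorem security_aware_reward_le_attack_free_general
    (b₀ τ : ℝ) (hτ : 0 < τ)
    (A G : ℝ → ℝ)
    (hAc : ContinuousOn A (Set.Ici 0))
    (hAm : StrictMonoOn A (Set.Ici 0))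
    (hG : ∀ r, G r = if A r ≤ 1 / τ then A r else 1 / τ)
    (rstar rAF : ℝ)
    (hstar_mem : rstar ∈ Set.Icc (0:ℝ) b₀)
    (hstar_max : ∀ r ∈ Set.Icc (0:ℝ) b₀, (b₀ - r) * G r ≤ (b₀ - rstar) * G rstar)
    (hAF_mem : rAF ∈ Set.Icc (0:ℝ) b₀)
    (hAF_max : ∀ r ∈ Set.Icc (0:ℝ) b₀, (b₀ - r) * A r ≤ (b₀ - rAF) * A rAF)
    (hAF_largest : ∀ r ∈ Set.Icc (0:ℝ) b₀,
      (∀ r' ∈ Set.Icc (0:ℝ) b₀, (b₀ - r') * A r' ≤ (b₀ - r) * A r) → r ≤ rAF) :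
    rstar ≤ rAF := by
  have hG_min : G = fun r => min (A r) (1 / τ) := funext fun r => by rw [hG, min_def]
  have hS : Icc 0 b₀ ⊆ Ici 0 := Icc_subset_Ici_self
  rw [← isMaxOn_iff, hG_min] at hstar_max
  by_contra! hlt
  have hcap : A rstar ≤ 1 / τ :=
    le_of_isMaxOn_mul_min (by positivity) (hAc.mono hS) hAF_mem hstar_mem hlt hstar_max
  have hstar_max_A := isMaxOn_mul_of_isMaxOn_mul_min (hAm.monotoneOn.mono hS) hAF_mem hstar_mem
    hlt.le hcap hstar_max (isMaxOn_iff.2 hAF_max)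
  exact hlt.not_ge (hAF_largest rstar hstar_mem (isMaxOn_iff.1 hstar_max_A))

/-- Corollary 2: any maximizer of the security-aware objective is no larger
than the (largest) attack-free optimal reward. -/
theorem security_aware_reward_le_attack_free
    (b₀ τ : ℝ) (hb : 0 < b₀) (hτ : 0 < τ)
    (A G : ℝ → ℝ)
    (hAc : ContinuousOn A (Set.Ici 0))
    (hAm : StrictMonoOn A (Set.Ici 0))
    (hA0 : A 0 = 0)
    (hAnn : ∀ r, 0 ≤ r → 0 ≤ A r)
    (hG : ∀ r, G r = if A r ≤ 1 / τ then A r else 1 / τ)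
    (rstar rAF : ℝ)
    (hstar_mem : rstar ∈ Set.Icc (0:ℝ) b₀)
    (hstar_max : ∀ r ∈ Set.Icc (0:ℝ) b₀, (b₀ - r) * G r ≤ (b₀ - rstar) * G rstar)
    (hAF_mem : rAF ∈ Set.Icc (0:ℝ) b₀)
    (hAF_max : ∀ r ∈ Set.Icc (0:ℝ) b₀, (b₀ - r) * A r ≤ (b₀ - rAF) * A rAF)
    (hAF_largest : ∀ r ∈ Set.Icc (0:ℝ) b₀,
      (∀ r' ∈ Set.Icc (0:ℝ) b₀, (b₀ - r') * A r' ≤ (b₀ - r) * A r) → r ≤ rAF) :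
    rstar ≤ rAF :=
  security_aware_reward_le_attack_free_general b₀ τ hτ A G hAc hAm hG rstar rAF hstar_mem hstar_max
    hAF_mem hAF_max hAF_largest
end

section
/- Fix τ > 0, K ≥ 1, weights w_k > 0 summing to 1, and θ ∈ (0,1). For each k suppose a_k ∈ (0,M] satisfies θ_k = τθa_k/(τθa_k+1) and θ = Σ_k w_k θ_k. Then the effective participation level satisfies Σ_{k=1}^K w_k (1 - θ_k) a_k = 1/τ. -/
/-!
Writing `c = τθ`, the steady-state relation `θ_k = c a_k / (c a_k + 1)` is equivalent to
`θ_k = c (1 - θ_k) a_k`. Averaging with the weights `w_k` turns the self-consistency condition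
`θ = Σ w_k θ_k` into `θ = τθ Σ w_k (1 - θ_k) a_k`, and cancelling `θ ≠ 0` leaves
`τ Σ w_k (1 - θ_k) a_k = 1`, independently of the individual `a_k`.
-/

theorem eq_mul_one_sub_of_eq_div_add_one {F : Type*} [Field F] {x y : F} (hx : x + 1 ≠ 0)
    (hy : y = x / (x + 1)) : y = x * (1 - y) := by
  subst hy
  field_simp
  ring

theorem effective_participation_pinned_general
    (K : ℕ) (τ M θ : ℝ) (hτ : 0 < τ)
    (hθ : θ ∈ Set.Ioo (0:ℝ) 1)
    (w a θk : Fin K → ℝ)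
    (ha : ∀ k, a k ∈ Set.Ioc (0:ℝ) M)
    (heq : ∀ k, θk k = τ * θ * a k / (τ * θ * a k + 1))
    (hsum : θ = ∑ k, w k * θk k) :
    ∑ k, w k * (1 - θk k) * a k = 1 / τ := by
  have hθ0 : 0 < θ := hθ.1
  have hfix : ∀ k, θk k = τ * θ * a k * (1 - θk k) := fun k =>
    eq_mul_one_sub_of_eq_div_add_one (by have := (ha k).1; positivity) (heq k)
  have hθ_eq : θ * 1 = θ * (τ * ∑ k, w k * (1 - θk k) * a k) := calc
    θ * 1 = ∑ k, w k * θk k := by rw [mul_one, hsum]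
    _ = ∑ k, τ * θ * (w k * (1 - θk k) * a k) :=
      Finset.sum_congr rfl fun k _ => by linear_combination w k * hfix k
    _ = θ * (τ * ∑ k, w k * (1 - θk k) * a k) := by rw [← Finset.mul_sum]; ring
  exact eq_one_div_of_mul_eq_one_right (mul_left_cancel₀ hθ0.ne' hθ_eq).symm

/-- steady-state identity — when the infection persists, the effective
participation level `Σ w_k (1-θ_k) a_k` is pinned at exactly `1/τ`. -/
theorem effective_participation_pinned
    (K : ℕ) (hK : 1 ≤ K) (τ M θ : ℝ) (hτ : 0 < τ) (hM : 0 < M)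
    (hθ : θ ∈ Set.Ioo (0:ℝ) 1)
    (w a θk : Fin K → ℝ)
    (hw : ∀ k, 0 < w k) (hws : ∑ k, w k = 1)
    (ha : ∀ k, a k ∈ Set.Ioc (0:ℝ) M)
    (heq : ∀ k, θk k = τ * θ * a k / (τ * θ * a k + 1))
    (hsum : θ = ∑ k, w k * θk k) :
    ∑ k, w k * (1 - θk k) * a k = 1 / τ :=
  effective_participation_pinned_general K τ M θ hτ hθ w a θk ha heq hsum
end
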